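/- arXiv:1306.3595 — 4 statements merged into one kernel-verified Lean document; each statement's English description precedes it below -/
import Mathlib

section
/- Let d ∈ (0,1), let F ∈ SR_d^2(0+) and set f(t,r) = F^{(0,1)}(t,r) for r < t. For t ∈ [0,1], v ∈ (0,1] and δ > 0 define f_δ(t,v) = f(t+δ, t+δ−δv)/f(t+δ, t). Then lim_{δ↓0} sup_{0 ≤ t ≤ 1} | ∫₀¹ |f_δ(t,v)| dv − 1/d | = 0. -/
open Set Filter MeasureTheory intervalIntegral Polynomial Metric
open scoped Topology

noncomputable section

/-- Mixed partial derivative `F^{(n,m)}`: `n` derivatives in the first (time) variable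
and `m` derivatives in the second variable. -/
noncomputable def pderiv2 (n m : ℕ) (F : ℝ → ℝ → ℝ) : ℝ → ℝ → ℝ :=
  fun s r => iteratedDeriv m (fun r' => iteratedDeriv n (fun s' => F s' r') s) r

/-- The closed half-plane `E = {(s,r) : r ≤ s}`. -/
def Ebar : Set (ℝ × ℝ) := {p | p.2 ≤ p.1}

/-- The open half-plane `Ẽ = {(s,r) : r < s}`. -/
def Etil : Set (ℝ × ℝ) := {p | p.2 < p.1}

/-- Membership in `C₊^{(k)}(E)` : continuous on `E`, `k` times continuously
differentiable on `Ẽ`, and strictly positive on `Ẽ`. -/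
structure CPlus (k : ℕ) (F : ℝ → ℝ → ℝ) : Prop where
  cont : ContinuousOn (fun p : ℝ × ℝ => F p.1 p.2) Ebar
  smooth : ContDiffOn ℝ k (fun p : ℝ × ℝ => F p.1 p.2) Etil
  pos : ∀ p ∈ Etil, 0 < F p.1 p.2

/-- `F` is a function of smooth variation of index `(ρ, k)` at the diagonal,
i.e. `F ∈ SR_ρ^k(0+)`. -/
structure SmoothVariation (ρ : ℝ) (k : ℕ) (F : ℝ → ℝ → ℝ) : Prop where
  mem : CPlus k F
  condA : ∀ K : Set ℝ, IsCompact K → ∀ ε > 0, ∃ h₀ > 0, ∀ h : ℝ, 0 < h → h < h₀ →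
    ∀ t ∈ K, |h * pderiv2 0 1 F t (t - h) / F t (t - h) + ρ| < ε
  condB : ∀ K : Set ℝ, IsCompact K → ∀ ε > 0, ∃ h₀ > 0, ∀ h : ℝ, 0 < h → h < h₀ →
    ∀ t ∈ K, |h * pderiv2 1 0 F (t + h) t / F (t + h) t - ρ| < ε
  condC : ∀ j : ℕ, 2 ≤ j → j ≤ k → ∀ K : Set ℝ, IsCompact K → ∀ ε > 0, ∃ h₀ > 0,
    ∀ h : ℝ, 0 < h → h < h₀ → ∀ t ∈ K,
      |h ^ j * pderiv2 (j - 1) 1 F t (t - h) / F t (t - h)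
        + ∏ i ∈ Finset.range j, (ρ - (i : ℝ))| < ε
  condD : ∀ K : Set ℝ, IsCompact K → ∀ ε > 0, ∃ h₀ > 0, ∀ h : ℝ, 0 < h → h < h₀ →
    ∀ t ∈ K, |h ^ 2 * pderiv2 0 2 F t (t - h) / F t (t - h) - ρ * (ρ - 1)| < ε

/-- The 2-microlocal space with gauge function `F`, `C_F^{d,s'}(t₀)`. -/
def MemCF (F : ℝ → ℝ → ℝ) (d s' t₀ : ℝ) (g : ℝ → ℝ) : Prop :=
  ∃ C > 0, ∃ h > 0, ∃ P : Polynomial ℝ, (P.natDegree : ℤ) ≤ ⌊d - s'⌋ ∧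
    ∀ u v : ℝ, u ∈ Metric.ball t₀ h → v ∈ Metric.ball t₀ h → v ≤ u →
      |(g u - P.eval u) - (g v - P.eval v)| ≤
        C * F u v * (|u - t₀| + |v - t₀|) ^ (-s')

/-- The classical 2-microlocal space `C^{σ,s'}(t₀)`. -/
def MemC2ML (σ s' t₀ : ℝ) (g : ℝ → ℝ) : Prop :=
  ∃ C > 0, ∃ h > 0, ∃ P : Polynomial ℝ, (P.natDegree : ℤ) ≤ ⌊σ - s'⌋ ∧
    ∀ u v : ℝ, u ∈ Metric.ball t₀ h → v ∈ Metric.ball t₀ h →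
      |(g u - P.eval u) - (g v - P.eval v)| ≤
        C * |u - v| ^ σ * (|u - t₀| + |v - t₀|) ^ (-s')

/-- The pointwise Hölder space `C^l(t₀)`. -/
def PtwHolder (l t₀ : ℝ) (g : ℝ → ℝ) : Prop :=
  ∃ C > 0, ∃ h > 0, ∃ P : Polynomial ℝ, (P.natDegree : ℤ) ≤ ⌊l⌋ ∧
    ∀ t ∈ Metric.ball t₀ h, |g t - P.eval t| ≤ C * |t - t₀| ^ l

/-- The pointwise Hölder exponent `h_g(t₀) = sup{l : g ∈ C^l(t₀)}`. -/
def holderExp (g : ℝ → ℝ) (t₀ : ℝ) : ℝ := sSup {l | PtwHolder l t₀ g}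

/-- The Hölder exponent with gauge function `F`,
`h̄^d_g(t₀) = d − inf{s' ≤ 0 : g ∈ C_F^{d,s'}(t₀)}`. -/
def holderGaugeExp (F : ℝ → ℝ → ℝ) (d : ℝ) (g : ℝ → ℝ) (t₀ : ℝ) : ℝ :=
  d - sInf {s' | s' ≤ 0 ∧ MemCF F d s' t₀ g}

/-- The 2-microlocal frontier `σ_{g,t₀}(s') = sup{σ ∈ [0,1) : g ∈ C^{σ,s'}(t₀)}`. -/
def frontier2ML (g : ℝ → ℝ) (t₀ s' : ℝ) : ℝ :=
  sSup {σ | σ ∈ Set.Ico (0:ℝ) 1 ∧ MemC2ML σ s' t₀ g}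

/-- `g` is càdlàg on `[0,∞)`: right-continuous with left limits. -/
def CadlagOn (g : ℝ → ℝ) : Prop :=
  (∀ t : ℝ, 0 ≤ t → Tendsto g (𝓝[Set.Ici t] t) (𝓝 (g t))) ∧
  (∀ t : ℝ, 0 < t → ∃ L : ℝ, Tendsto g (𝓝[Set.Iio t] t) (𝓝 L))

/-!
With `s = t + δ`, the map `v ↦ F(s, s - δv)` has derivative `-δ f(s, s - δv)`, which is
nonnegative because condition (a) forces `f < 0` near the diagonal; so its integral over `[0,1]`
is `F(s, t) - F(s, s)`. Condition (a) also gives `h ∂ₕ F(s, s - h) ≥ (d/2) F(s, s - h)`, hence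
`F(s, s - h) = O(h^{d/2})` and `F(s, s) = 0`. Thus `∫₀¹ |f_δ(t,v)| dv = F(s, t) / (-δ f(s, t))`,
the reciprocal of a quantity that tends to `d` uniformly by condition (a) at `h = δ`.
-/

lemma eq_zero_of_mul_le_mul_deriv {φ φ' : ℝ → ℝ} {b c : ℝ} (hb : 0 < b) (hc : 0 < c)
    (hcont : ContinuousOn φ (Icc 0 b)) (hderiv : ∀ x ∈ Ioo 0 b, HasDerivAt φ (φ' x) x)
    (hnonneg : ∀ x ∈ Ioo 0 b, 0 ≤ φ x) (hle : ∀ x ∈ Ioo 0 b, c * φ x ≤ x * φ' x) :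
    φ 0 = 0 := by
  -- `x ↦ φ x * x ^ (-c)` is monotone, which gives `φ x ≤ C * x ^ c`.
  set ψ : ℝ → ℝ := fun x => φ x * x ^ (-c)
  have hψ : ∀ x ∈ Ioo 0 b, HasDerivAt ψ (φ' x * x ^ (-c) + φ x * (-c * x ^ (-c - 1))) x :=
    fun x hx => (hderiv x hx).mul (Real.hasDerivAt_rpow_const (Or.inl hx.1.ne'))
  have hψ_mono : MonotoneOn ψ (Ioc 0 b) := by
    refine monotoneOn_of_hasDerivWithinAt_nonneg (convex_Ioc 0 b)
      (f' := fun x => φ' x * x ^ (-c) + φ x * (-c * x ^ (-c - 1))) ?_ ?_ ?_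
    · intro x hx
      exact ((hcont x (Ioc_subset_Icc_self hx)).mono Ioc_subset_Icc_self).mul
        (Real.continuousAt_rpow_const _ _ (Or.inl hx.1.ne')).continuousWithinAt
    · rw [interior_Ioc]
      exact fun x hx => (hψ x hx).hasDerivWithinAt
    · rw [interior_Ioc]
      intro x hx
      have hx0 : x ≠ 0 := hx.1.ne'
      have hsplit : φ' x * x ^ (-c) + φ x * (-c * x ^ (-c - 1))
          = x ^ (-c) / x * (x * φ' x - c * φ x) := by
        rw [Real.rpow_sub_one hx0]; field_simp; ring
      rw [hsplit]
      exact mul_nonneg (by have := hx.1; positivity) (by linarith [hle x hx])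
  have hbound : ∀ x ∈ Ioo 0 b, φ x ≤ ψ b * x ^ c := by
    intro x hx
    have hφ : φ x = ψ x * x ^ c := by
      simp only [ψ, Real.rpow_neg hx.1.le]
      field_simp [(Real.rpow_pos_of_pos hx.1 c).ne']
    rw [hφ]
    exact mul_le_mul_of_nonneg_right
      (hψ_mono (Ioo_subset_Ioc_self hx) (right_mem_Ioc.2 hb) hx.2.le) (by have := hx.1; positivity)
  have hφ_lim : Tendsto φ (𝓝[>] 0) (𝓝 (φ 0)) := by
    rw [← nhdsWithin_Ioc_eq_nhdsGT hb]
    exact ((hcont 0 (left_mem_Icc.2 hb.le)).mono Ioc_subset_Icc_self).tendsto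
  have hpow_lim : Tendsto (fun x : ℝ => ψ b * x ^ c) (𝓝[>] 0) (𝓝 0) := by
    have := ((Real.continuous_rpow_const hc.le).tendsto 0).const_mul (ψ b)
    rw [Real.zero_rpow hc.ne', mul_zero] at this
    exact this.mono_left nhdsWithin_le_nhds
  have hIoo : Ioo 0 b ∈ 𝓝[>] (0 : ℝ) := Ioo_mem_nhdsGT hb
  exact le_antisymm
    (le_of_tendsto_of_tendsto hφ_lim hpow_lim (eventually_of_mem hIoo hbound))
    (ge_of_tendsto hφ_lim (eventually_of_mem hIoo hnonneg))

namespace CPlus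

variable {k : ℕ} {F : ℝ → ℝ → ℝ}

lemma hasDerivAt_pderiv2_zero_one (hF : CPlus k F) (hk : k ≠ 0) {s r : ℝ} (h : r < s) :
    HasDerivAt (F s) (pderiv2 0 1 F s r) r := by
  have hdiff : DifferentiableAt ℝ (fun p : ℝ × ℝ => F p.1 p.2) (s, r) :=
    (hF.smooth.differentiableOn (by exact_mod_cast hk)).differentiableAt
      ((isOpen_lt continuous_snd continuous_fst).mem_nhds h)
  have : DifferentiableAt ℝ (F s) r :=
    hdiff.comp r ((differentiableAt_const s).prodMk differentiableAt_id)
  simpa [pderiv2] using this.hasDerivAt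

lemma hasDerivAt_apply_sub_mul (hF : CPlus k F) (hk : k ≠ 0) {s δ v : ℝ} (hδ : 0 < δ)
    (hv : 0 < v) :
    HasDerivAt (fun v => F s (s - δ * v)) (-(δ * pderiv2 0 1 F s (s - δ * v))) v := by
  have hinner : HasDerivAt (fun v => s - δ * v) (-δ) v := by
    simpa using ((hasDerivAt_id v).const_mul δ).const_sub s
  have := (hF.hasDerivAt_pderiv2_zero_one hk (by nlinarith : s - δ * v < s)).comp v hinner
  rwa [mul_neg, mul_comm] at this

lemma continuousOn_apply_sub_mul (hF : CPlus k F) {s δ : ℝ} (hδ : 0 ≤ δ) :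
    ContinuousOn (fun v => F s (s - δ * v)) (Ici 0) := by
  refine hF.cont.comp (f := fun v => (s, s - δ * v)) (by fun_prop) fun v hv => ?_
  show s - δ * v ≤ s
  nlinarith [mem_Ici.1 hv]

lemma apply_self_eq_zero (hF : CPlus k F) (hk : k ≠ 0) {s δ c : ℝ} (hc : 0 < c) (hδ : 0 < δ)
    (hle : ∀ h ∈ Ioo 0 δ, c * F s (s - h) ≤ -(h * pderiv2 0 1 F s (s - h))) :
    F s s = 0 := by
  have hmaps : ∀ v ∈ Ioo (0 : ℝ) 1, δ * v ∈ Ioo 0 δ := fun v hv =>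
    ⟨mul_pos hδ hv.1, mul_lt_of_lt_one_right hδ hv.2⟩
  simpa using eq_zero_of_mul_le_mul_deriv one_pos hc
    ((hF.continuousOn_apply_sub_mul hδ.le).mono Icc_subset_Ici_self)
    (fun v hv => hF.hasDerivAt_apply_sub_mul hk hδ hv.1)
    (fun v hv => (hF.pos (s, s - δ * v) (by simpa [Etil] using (hmaps v hv).1)).le)
    (fun v hv => by have := hle _ (hmaps v hv); linarith)

lemma integral_abs_pderiv2_div (hF : CPlus k F) (hk : k ≠ 0) {t δ : ℝ} (hδ : 0 < δ)
    (hneg : ∀ h ∈ Ioc 0 δ, pderiv2 0 1 F (t + δ) (t + δ - h) < 0)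
    (hdiag : F (t + δ) (t + δ) = 0) :
    ∫ v in (0:ℝ)..1, |pderiv2 0 1 F (t + δ) (t + δ - δ * v) / pderiv2 0 1 F (t + δ) t|
      = F (t + δ) t / -(δ * pderiv2 0 1 F (t + δ) t) := by
  set s := t + δ
  set f := pderiv2 0 1 F s
  have hst : s - δ = t := add_sub_cancel_right t δ
  have hmaps : ∀ v ∈ Ioc (0 : ℝ) 1, δ * v ∈ Ioc 0 δ := fun v hv =>
    ⟨mul_pos hδ hv.1, mul_le_of_le_one_right hδ.le hv.2⟩
  have hft : f t < 0 := by simpa [hst] using hneg δ (right_mem_Ioc.2 hδ)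
  have hderiv : ∀ v ∈ Ioo (0 : ℝ) 1,
      HasDerivAt (fun v => F s (s - δ * v)) (-(δ * f (s - δ * v))) v :=
    fun v hv => hF.hasDerivAt_apply_sub_mul hk hδ hv.1
  have hcont : ContinuousOn (fun v => F s (s - δ * v)) (Icc 0 1) :=
    (hF.continuousOn_apply_sub_mul hδ.le).mono Icc_subset_Ici_self
  have hftc : ∫ v in (0:ℝ)..1, -(δ * f (s - δ * v)) = F s t := by
    rw [integral_eq_sub_of_hasDerivAt_of_le zero_le_one hcont hderiv
      (intervalIntegrable_deriv_of_nonneg (by rwa [uIcc_of_le zero_le_one]) (by simpa using hderiv)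
        (fun v hv => by
          have := hneg _ (hmaps v (Ioo_subset_Ioc_self (by simpa using hv)))
          nlinarith))]
    simp [hst, hdiag]
  calc ∫ v in (0:ℝ)..1, |f (s - δ * v) / f t|
      = ∫ v in (0:ℝ)..1, -(δ * f (s - δ * v)) / -(δ * f t) := by
        refine integral_congr_ae (Eventually.of_forall fun v hv => ?_)
        rw [uIoc_of_le zero_le_one] at hv
        rw [abs_of_pos (div_pos_of_neg_of_neg (hneg _ (hmaps v hv)) hft), neg_div_neg_eq,
          mul_div_mul_left _ _ hδ.ne']
    _ = F s t / -(δ * f t) := by rw [intervalIntegral.integral_div, hftc]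

end CPlus

lemma SmoothVariation.exists_pderiv2_bounds {ρ : ℝ} {k : ℕ} {F : ℝ → ℝ → ℝ}
    (hF : SmoothVariation ρ k F) (hρ : 0 < ρ) {K : Set ℝ} (hK : IsCompact K) :
    ∃ h₀ > 0, ∀ h : ℝ, 0 < h → h < h₀ → ∀ t ∈ K, pderiv2 0 1 F t (t - h) < 0 ∧
      ρ / 2 * F t (t - h) ≤ -(h * pderiv2 0 1 F t (t - h)) := by
  obtain ⟨h₀, hh₀, hA⟩ := hF.condA K hK (ρ / 2) (half_pos hρ)
  refine ⟨h₀, hh₀, fun h hh hhh₀ t ht => ?_⟩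
  have hFpos : 0 < F t (t - h) := hF.mem.pos (t, t - h) (show t - h < t by linarith)
  have hq : h * pderiv2 0 1 F t (t - h) < -(ρ / 2 * F t (t - h)) := by
    rw [← neg_mul, ← div_lt_iff₀ hFpos]
    linarith [(abs_lt.1 (hA h hh hhh₀ t ht)).2]
  exact ⟨neg_of_mul_neg_right (by nlinarith) hh.le, by linarith⟩

/-- Lemma 3.2: `lim_{δ↓0} sup_{0≤t≤1} |∫₀¹ |f_δ(t,v)| dv − 1/d| = 0`,
where `f_δ(t,v) = f(t+δ, t+δ−δv)/f(t+δ, t)` and `f = F^{(0,1)}`. -/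
theorem fdelta_integral_tendsto
    (d : ℝ) (hd : d ∈ Set.Ioo (0:ℝ) 1) (F : ℝ → ℝ → ℝ)
    (hF : SmoothVariation d 2 F) (f : ℝ → ℝ → ℝ) (hf : f = pderiv2 0 1 F) :
    ∀ ε > 0, ∃ δ₀ > 0, ∀ δ : ℝ, 0 < δ → δ < δ₀ → ∀ t ∈ Set.Icc (0:ℝ) 1,
      |(∫ v in (0:ℝ)..1, |f (t + δ) (t + δ - δ * v) / f (t + δ) t|) - 1 / d| < ε := by
  intro ε hε
  subst hf
  obtain ⟨η, hη, hinv⟩ : ∃ η > 0, ∀ x : ℝ, dist x d < η → dist (1 / x) (1 / d) < ε :=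
    Metric.continuousAt_iff.1 (continuousAt_const.div continuousAt_id hd.1.ne') ε hε
  obtain ⟨h₁, hh₁, hbounds⟩ := hF.exists_pderiv2_bounds hd.1 (isCompact_Icc (a := 0) (b := 2))
  obtain ⟨h₂, hh₂, hA⟩ := hF.condA (Icc 0 2) isCompact_Icc η hη
  refine ⟨min 1 (min h₁ h₂), by positivity, fun δ hδ hδ₀ t ht => ?_⟩
  simp only [lt_min_iff] at hδ₀
  have hs : t + δ ∈ Icc (0:ℝ) 2 := ⟨by linarith [ht.1], by linarith [ht.2]⟩
  have hbounds' := fun h (hh : h ∈ Ioc 0 δ) => hbounds h hh.1 (by linarith [hh.2]) _ hs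
  have hdiag := hF.mem.apply_self_eq_zero two_ne_zero (half_pos hd.1) hδ
    fun h hh => (hbounds' h (Ioo_subset_Ioc_self hh)).2
  rw [hF.mem.integral_abs_pderiv2_div two_ne_zero hδ (fun h hh => (hbounds' h hh).1) hdiag,
    ← one_div_div]
  apply hinv
  have hAδ := hA δ hδ hδ₀.2.2 _ hs
  rw [add_sub_cancel_right] at hAδ
  rw [Real.dist_eq, neg_div, ← abs_neg]
  convert hAδ using 2
  ring
end
end

section
/- Let d ∈ (0,1), l > 0, let F ∈ SR_d^{⌊l+d⌋+2}(0+), set f = F^{(0,1)}, let g : [0,∞) → ℝ be càdlàg, let t ∈ (0,1), let ε ∈ (0,l), and let P be a polynomial of degree at most ⌊l⌋ such that |g(r) − P(r)| ≤ C₀|r−t|^{l−ε} for all r ∈ [0,1] and some C₀ > 0. Then there exist a constant C > 0 and a radius h > 0 such that |I₁,₁(v,δ)| ≤ C·F(u,v)·(|u−t|^{l−ε} + |v−t|^{l−ε}) for all u,v ∈ B(t,h) with 0 < v < u and δ = u − v. -/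
/-!
Condition (a) of smooth variation makes `r ↦ F u r` decreasing on `[u - h₀, u)`, i.e.
`f u r ≤ 0` there. After the substitution `r = v + δ (1 - z)`, `I₁,₁` becomes
`∫ r in v..u, f u r * (g r - P r)`, whose absolute value is at most `sup_{[v,u]} |g - P|` times
`∫ r in v..u, -f u r = F u v - F u u ≤ F u v`; the Hölder bound on `g - P` at `t` controls that
supremum by `|u - t| ^ (l - ε) + |v - t| ^ (l - ε)`.
-/

open Set Filter MeasureTheory intervalIntegral Polynomial Metric
open scoped Topology

noncomputable section

theorem abs_integral_deriv_mul_le_of_deriv_nonpos {G G' q : ℝ → ℝ} {a b M : ℝ} (hab : a ≤ b)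
    (hG : ContinuousOn G (Icc a b)) (hderiv : ∀ x ∈ Ioo a b, HasDerivAt G (G' x) x)
    (hG' : ∀ x ∈ Ioo a b, G' x ≤ 0) (hq : ∀ x ∈ Ioo a b, |q x| ≤ M) :
    |∫ x in a..b, G' x * q x| ≤ M * (G a - G b) := by
  have hint : IntervalIntegrable (fun x => -G' x) volume a b :=
    (intervalIntegrable_iff_integrableOn_Ioc_of_le hab).2 <|
      integrableOn_deriv_of_nonneg hG.neg (fun x hx => (hderiv x hx).neg)
        fun x hx => neg_nonneg.2 (hG' x hx)
  have hFTC : ∫ x in a..b, -G' x = G a - G b := by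
    rw [integral_eq_sub_of_hasDerivAt_of_le hab hG.neg (fun x hx => (hderiv x hx).neg) hint,
      Pi.neg_apply, Pi.neg_apply, neg_sub_neg]
  have hpointwise : ∀ᵐ x, x ∈ Ioc a b → ‖G' x * q x‖ ≤ M * -G' x := by
    filter_upwards [Measure.ae_ne volume b] with x hxb hx
    have hx' : x ∈ Ioo a b := ⟨hx.1, lt_of_le_of_ne hx.2 hxb⟩
    rw [Real.norm_eq_abs, abs_mul, abs_of_nonpos (hG' x hx'), mul_comm]
    exact mul_le_mul_of_nonneg_right (hq x hx') (neg_nonneg.2 (hG' x hx'))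
  calc |∫ x in a..b, G' x * q x| ≤ ∫ x in a..b, M * -G' x :=
        norm_integral_le_of_norm_le hab hpointwise (hint.const_mul M)
    _ = M * (G a - G b) := by rw [intervalIntegral.integral_const_mul, hFTC]

theorem mul_integral_comp_add_mul_one_sub (φ : ℝ → ℝ) (u v : ℝ) :
    (u - v) * ∫ z in (0:ℝ)..1, φ (v + (u - v) * (1 - z)) = ∫ r in v..u, φ r := by
  have hrw : ∀ z : ℝ, v + (u - v) * (1 - z) = u - (u - v) * z := fun z => by ring
  simp only [hrw, mul_integral_comp_sub_mul]
  congr 1 <;> ring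

theorem rpow_abs_sub_le_add_of_mem_Icc {a r t u v : ℝ} (ha : 0 ≤ a) (hr : r ∈ Icc v u) :
    |r - t| ^ a ≤ |u - t| ^ a + |v - t| ^ a := by
  have hmax : |r - t| ≤ max |v - t| |u - t| :=
    abs_le_max_abs_abs (by linarith [hr.1]) (by linarith [hr.2])
  calc |r - t| ^ a ≤ max |v - t| |u - t| ^ a := Real.rpow_le_rpow (abs_nonneg _) hmax ha
    _ ≤ |u - t| ^ a + |v - t| ^ a := by
      rcases max_choice |v - t| |u - t| with h | h <;> rw [h]
      · linarith [Real.rpow_nonneg (abs_nonneg (u - t)) a]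
      · linarith [Real.rpow_nonneg (abs_nonneg (v - t)) a]

namespace CPlus

variable {k : ℕ} {F : ℝ → ℝ → ℝ}

theorem continuousOn_snd (hF : CPlus k F) (s : ℝ) : ContinuousOn (fun r => F s r) (Iic s) :=
  hF.cont.comp (f := fun r => (s, r)) (Continuous.continuousOn (by fun_prop)) fun _ hr => hr

theorem nonneg (hF : CPlus k F) {s r : ℝ} (hrs : r ≤ s) : 0 ≤ F s r := by
  rcases hrs.lt_or_eq with hlt | rfl
  · exact (hF.pos (s, r) hlt).le
  · have hc : ContinuousWithinAt (fun r' => F r r') (Iio r) r :=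
      (hF.continuousOn_snd r r self_mem_Iic).mono Iio_subset_Iic_self
    exact ge_of_tendsto hc (eventually_nhdsWithin_of_forall fun r' hr' => (hF.pos (r, r') hr').le)

theorem hasDerivAt_snd (hF : CPlus k F) (hk : k ≠ 0) {s r : ℝ} (hrs : r < s) :
    HasDerivAt (fun r' => F s r') (pderiv2 0 1 F s r) r := by
  have hdiff : DifferentiableAt ℝ (fun p : ℝ × ℝ => F p.1 p.2) (s, r) :=
    (hF.smooth.contDiffAt ((isOpen_lt continuous_snd continuous_fst).mem_nhds hrs)
      ).differentiableAt (by exact_mod_cast hk)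
  have hsec : DifferentiableAt ℝ (fun r' => F s r') r :=
    hdiff.comp r (differentiableAt_const s |>.prodMk differentiableAt_id)
  simpa [pderiv2] using hsec.hasDerivAt

end CPlus

theorem SmoothVariation.exists_pderiv2_zero_one_neg {ρ : ℝ} {k : ℕ} {F : ℝ → ℝ → ℝ}
    (hF : SmoothVariation ρ k F) (hρ : 0 < ρ) {K : Set ℝ} (hK : IsCompact K) :
    ∃ h₀ > 0, ∀ s ∈ K, ∀ r < s, s - r < h₀ → pderiv2 0 1 F s r < 0 := by
  obtain ⟨h₀, hh₀, hA⟩ := hF.condA K hK (ρ / 2) (half_pos hρ)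
  refine ⟨h₀, hh₀, fun s hs r hrs hr => ?_⟩
  have hclose := hA (s - r) (sub_pos.2 hrs) hr s hs
  rw [sub_sub_cancel] at hclose
  by_contra! hnonneg
  have : 0 ≤ (s - r) * pderiv2 0 1 F s r / F s r :=
    div_nonneg (mul_nonneg (sub_pos.2 hrs).le hnonneg) (hF.mem.pos (s, r) hrs).le
  linarith [(abs_lt.1 hclose).2]

theorem bound_I11_general
    (d l : ℝ) (hd : d ∈ Set.Ioo (0:ℝ) 1)
    (F : ℝ → ℝ → ℝ) (hF : SmoothVariation d ((⌊l + d⌋).toNat + 2) F)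
    (f : ℝ → ℝ → ℝ) (hf : f = pderiv2 0 1 F)
    (g : ℝ → ℝ)
    (t : ℝ) (ht : t ∈ Set.Ioo (0:ℝ) 1) (ε : ℝ) (hε : ε ∈ Set.Ioo (0:ℝ) l)
    (P : Polynomial ℝ)
    (C₀ : ℝ) (hC₀ : 0 < C₀)
    (hgP : ∀ r ∈ Set.Icc (0:ℝ) 1, |g r - P.eval r| ≤ C₀ * |r - t| ^ (l - ε)) :
    ∃ C > 0, ∃ h > 0, ∀ u v : ℝ, u ∈ Metric.ball t h → v ∈ Metric.ball t h →
      0 < v → v < u →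
      |(u - v) * ∫ z in (0:ℝ)..1, f (v + (u - v)) (v + (u - v) * (1 - z)) *
          (g (v + (u - v) * (1 - z)) - P.eval (v + (u - v) * (1 - z)))| ≤
        C * F u v * (|u - t| ^ (l - ε) + |v - t| ^ (l - ε)) := by
  obtain ⟨h₀, hh₀, hneg⟩ := hF.exists_pderiv2_zero_one_neg hd.1 (isCompact_closedBall t 1)
  refine ⟨C₀, hC₀, min (1 - t) (h₀ / 2), lt_min (sub_pos.2 ht.2) (half_pos hh₀), ?_⟩
  intro u v hu hv hv0 hvu
  rw [mem_ball, Real.dist_eq, lt_min_iff] at hu hv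
  have hu_lt_one : u < 1 := by linarith [(abs_lt.1 hu.1).2]
  have hu_mem : u ∈ closedBall t 1 := by
    rw [mem_closedBall, Real.dist_eq]; linarith [ht.1, hu.1]
  have hgap : u - v < h₀ := by linarith [(abs_lt.1 hu.2).2, (abs_lt.1 hv.2).1]
  set M := C₀ * (|u - t| ^ (l - ε) + |v - t| ^ (l - ε))
  have hgP_le : ∀ r ∈ Ioo v u, |g r - P.eval r| ≤ M := fun r hr =>
    (hgP r ⟨by linarith [hr.1], by linarith [hr.2]⟩).trans <| mul_le_mul_of_nonneg_left
      (rpow_abs_sub_le_add_of_mem_Icc (sub_nonneg.2 hε.2.le) (Ioo_subset_Icc_self hr)) hC₀.le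
  rw [add_sub_cancel, hf,
    mul_integral_comp_add_mul_one_sub (fun r => pderiv2 0 1 F u r * (g r - P.eval r))]
  calc _ ≤ M * (F u v - F u u) :=
        abs_integral_deriv_mul_le_of_deriv_nonpos hvu.le
          ((hF.mem.continuousOn_snd u).mono Icc_subset_Iic_self)
          (fun r hr => hF.mem.hasDerivAt_snd (by omega) hr.2)
          (fun r hr => (hneg u hu_mem r hr.2 (by linarith [hr.1])).le) hgP_le
    _ ≤ M * F u v :=
        mul_le_mul_of_nonneg_left (sub_le_self _ (hF.mem.nonneg le_rfl)) (by positivity)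
    _ = C₀ * F u v * (|u - t| ^ (l - ε) + |v - t| ^ (l - ε)) := by ring

/-- Lemma 3.6: bound on `I₁,₁`. -/
theorem bound_I11
    (d l : ℝ) (hd : d ∈ Set.Ioo (0:ℝ) 1) (hl : 0 < l)
    (F : ℝ → ℝ → ℝ) (hF : SmoothVariation d ((⌊l + d⌋).toNat + 2) F)
    (f : ℝ → ℝ → ℝ) (hf : f = pderiv2 0 1 F)
    (g : ℝ → ℝ) (hg : CadlagOn g)
    (t : ℝ) (ht : t ∈ Set.Ioo (0:ℝ) 1) (ε : ℝ) (hε : ε ∈ Set.Ioo (0:ℝ) l)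
    (P : Polynomial ℝ) (hP : (P.natDegree : ℤ) ≤ ⌊l⌋)
    (C₀ : ℝ) (hC₀ : 0 < C₀)
    (hgP : ∀ r ∈ Set.Icc (0:ℝ) 1, |g r - P.eval r| ≤ C₀ * |r - t| ^ (l - ε)) :
    ∃ C > 0, ∃ h > 0, ∀ u v : ℝ, u ∈ Metric.ball t h → v ∈ Metric.ball t h →
      0 < v → v < u →
      |(u - v) * ∫ z in (0:ℝ)..1, f (v + (u - v)) (v + (u - v) * (1 - z)) *
          (g (v + (u - v) * (1 - z)) - P.eval (v + (u - v) * (1 - z)))| ≤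
        C * F u v * (|u - t| ^ (l - ε) + |v - t| ^ (l - ε)) :=
  bound_I11_general d l hd F hF f hf g t ht ε hε P C₀ hC₀ hgP
end
end

section
/- Let d ∈ (0,1), l > 0, let F ∈ SR_d^{⌊l+d⌋+2}(0+), set f = F^{(0,1)}, let g : [0,∞) → ℝ be càdlàg, let t ∈ (0,1), let ε ∈ (0,l), and let P be a polynomial of degree at most ⌊l⌋ such that |g(r) − P(r)| ≤ C₀|r−t|^{l−ε} for all r ∈ [0,1] and some C₀ > 0. Then for every h ∈ (0,t) there exist a polynomial P³ of degree at most ⌊l+d⌋ and constants C > 0, h' > 0 such that |∫₀^{t−h} (f(u,r) − f(v,r))[g(r) − P(r)]dr − P³(u) + P³(v)| ≤ C·F(u,v)·(|u−t|^{l−ε} + |v−t|^{l−ε}) for all u,v ∈ B(t,h') with v < u. -/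
/-!
For `u` near `t` the points `(u, r)`, `r ≤ t - h`, stay away from the diagonal, so
`I(u) = ∫₀^{t-h} f(u,r) (g(r) - P(r)) dr` is `n + 1` times differentiable near `t`, with
`n = ⌊l + d⌋`. Take `P³` to be its Taylor polynomial of order `n` at `t`: by the mean value
theorem the remainder `R = I - P³` satisfies `|R(u) - R(v)| ≤ M max(|u-t|, |v-t|)^n |u - v|`.
Condition (a) of smooth variation makes `F(u,v) / (u-v)^ρ` nondecreasing in `v` close to `u`
for every `ρ > d`, hence `F(u,v) ≥ c (u-v)^ρ` near the diagonal. With `ρ = min(d + ε, 1)`, splitting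
`|u - v| = |u - v|^{1-ρ} |u - v|^ρ` and using `n + 1 - ρ ≥ l - ε` turns the bound into
`C F(u,v) (|u-t|^{l-ε} + |v-t|^{l-ε})`.
-/

open Set Filter MeasureTheory intervalIntegral Polynomial Metric
open scoped Topology

noncomputable section

theorem measurable_of_continuousWithinAt_Ici {β : Type*} [TopologicalSpace β]
    [TopologicalSpace.PseudoMetrizableSpace β] [MeasurableSpace β] [BorelSpace β]
    {f : ℝ → β} (hf : ∀ x, ContinuousWithinAt f (Ici x) x) : Measurable f := by
  -- `f` is the pointwise limit of the step functions `f (⌈(n + 1) x⌉ / (n + 1))`, whose grid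
  -- points approach `x` from the right
  have hgrid : ∀ x : ℝ,
      Tendsto (fun n : ℕ => (⌈((n : ℝ) + 1) * x⌉ : ℝ) / ((n : ℝ) + 1)) atTop (𝓝[≥] x) := by
    intro x
    have hle : ∀ n : ℕ, x ≤ (⌈((n : ℝ) + 1) * x⌉ : ℝ) / ((n : ℝ) + 1) := fun n => by
      rw [le_div_iff₀ (by positivity)]
      linarith [Int.le_ceil (((n : ℝ) + 1) * x)]
    refine tendsto_nhdsWithin_of_tendsto_nhds_of_eventually_within _ ?_
      (Eventually.of_forall hle)
    refine tendsto_of_tendsto_of_tendsto_of_le_of_le tendsto_const_nhds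
      (h := fun n : ℕ => x + 1 / ((n : ℝ) + 1)) ?_ hle fun n => ?_
    · simpa using
        (tendsto_const_nhds (x := x)).add (tendsto_one_div_add_atTop_nhds_zero_nat (𝕜 := ℝ))
    · show _ ≤ x + 1 / ((n : ℝ) + 1)
      have hn : (x + 1 / ((n : ℝ) + 1)) * ((n : ℝ) + 1) = ((n : ℝ) + 1) * x + 1 := by
        field_simp
      rw [div_le_iff₀ (by positivity), hn]
      linarith [Int.ceil_lt_add_one (((n : ℝ) + 1) * x)]
  refine measurable_of_tendsto_metrizable
    (f := fun (n : ℕ) x => f ((⌈((n : ℝ) + 1) * x⌉ : ℝ) / ((n : ℝ) + 1))) (fun n => ?_)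
    (tendsto_pi_nhds.2 fun x => (hf x).tendsto.comp (hgrid x))
  exact (measurable_from_top (f := fun k : ℤ => f (k / ((n : ℝ) + 1)))).comp
    (Int.measurable_ceil.comp (measurable_const_mul _))

theorem CadlagOn.aestronglyMeasurable_restrict_Ioc {g : ℝ → ℝ} (hg : CadlagOn g) {a : ℝ}
    (ha : 0 ≤ a) (b : ℝ) : AEStronglyMeasurable g (volume.restrict (Ioc a b)) := by
  have hmeas : Measurable fun x => g (max x 0) :=
    measurable_of_continuousWithinAt_Ici fun x =>
      ContinuousWithinAt.comp (hg.1 _ (le_max_right x 0))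
        (continuous_id.max continuous_const).continuousWithinAt
        fun _ hy => mem_Ici.2 (max_le_max_right 0 hy)
  refine hmeas.aestronglyMeasurable.congr ?_
  filter_upwards [ae_restrict_mem measurableSet_Ioc] with r hr
  simp [max_eq_left (ha.trans hr.1.le)]

theorem abs_sub_le_mul_of_hasDerivAt_ball {f f' : ℝ → ℝ} {t δ u v C : ℝ}
    (hu : u ∈ ball t δ) (hv : v ∈ ball t δ)
    (hf : ∀ y ∈ ball t δ, HasDerivAt f (f' y) y)
    (hf' : ∀ y ∈ ball t δ, |y - t| ≤ max |u - t| |v - t| → |f' y| ≤ C) :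
    |f u - f v| ≤ C * |u - v| := by
  set s := closedBall t (max |u - t| |v - t|) ∩ ball t δ
  have hus : u ∈ s := ⟨by simp [Real.dist_eq], hu⟩
  have hvs : v ∈ s := ⟨by simp [Real.dist_eq], hv⟩
  simpa [Real.norm_eq_abs] using
    ((convex_closedBall _ _).inter (convex_ball _ _)).norm_image_sub_le_of_norm_hasDerivWithin_le
      (fun y hy => (hf y hy.2).hasDerivWithinAt)
      (fun y hy => hf' y hy.2 (by simpa [Real.dist_eq] using hy.1)) hvs hus

open Nat in
/-- The Taylor polynomial of order `n` at `t`, where `I j` stands for the `j`-th derivative. -/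
def taylorPoly (I : ℕ → ℝ → ℝ) (t : ℝ) (n : ℕ) : ℝ[X] :=
  ∑ i ∈ Finset.range (n + 1), C (I i t / i !) * (X - C t) ^ i

def taylorRemainder (I : ℕ → ℝ → ℝ) (t : ℝ) (n : ℕ) (x : ℝ) : ℝ :=
  I 0 x - (taylorPoly I t n).eval x

theorem natDegree_taylorPoly_le (I : ℕ → ℝ → ℝ) (t : ℝ) (n : ℕ) :
    (taylorPoly I t n).natDegree ≤ n := by
  refine natDegree_sum_le_of_forall_le _ _ fun i hi => ?_
  refine (natDegree_C_mul_le _ _).trans ?_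
  rw [natDegree_pow, natDegree_X_sub_C, mul_one]
  exact Nat.lt_succ_iff.1 (Finset.mem_range.1 hi)

open Nat in
theorem eval_taylorPoly (I : ℕ → ℝ → ℝ) (t : ℝ) (n : ℕ) (x : ℝ) :
    (taylorPoly I t n).eval x = ∑ i ∈ Finset.range (n + 1), I i t / i ! * (x - t) ^ i := by
  simp [taylorPoly, eval_finsetSum]

theorem taylorRemainder_self (I : ℕ → ℝ → ℝ) (t : ℝ) (n : ℕ) : taylorRemainder I t n t = 0 := by
  simp [taylorRemainder, eval_taylorPoly, Finset.sum_range_succ']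

open Nat in
theorem hasDerivAt_taylorRemainder {I : ℕ → ℝ → ℝ} {t x : ℝ} (n : ℕ)
    (hI : HasDerivAt (I 0) (I 1 x) x) :
    HasDerivAt (taylorRemainder I t (n + 1)) (taylorRemainder (fun j => I (j + 1)) t n x) x := by
  have hpoly : HasDerivAt
      (fun y => ∑ i ∈ Finset.range (n + 1), I (i + 1) t / (i + 1)! * (y - t) ^ (i + 1))
      (∑ i ∈ Finset.range (n + 1), I (i + 1) t / i ! * (x - t) ^ i) x := by
    refine HasDerivAt.fun_sum fun i _ => ?_
    refine ((((hasDerivAt_id x).sub_const t).fun_pow (i + 1)).const_mul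
      (I (i + 1) t / (i + 1)!)).congr_deriv ?_
    push_cast [Nat.factorial_succ]
    field_simp
    simp
  have hsplit : taylorRemainder I t (n + 1) = fun y =>
      I 0 y - (∑ i ∈ Finset.range (n + 1), I (i + 1) t / (i + 1)! * (y - t) ^ (i + 1) + I 0 t) := by
    ext y
    simp [taylorRemainder, eval_taylorPoly, Finset.sum_range_succ' _ (n + 1)]
  rw [hsplit]
  exact (hI.sub (hpoly.add_const _)).congr_deriv (by simp [taylorRemainder, eval_taylorPoly])

theorem abs_taylorRemainder_sub_le {t η M : ℝ} (n : ℕ) (I : ℕ → ℝ → ℝ)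
    (hI : ∀ j ≤ n, ∀ x ∈ ball t η, HasDerivAt (I j) (I (j + 1) x) x)
    (hM : ∀ x ∈ ball t η, |I (n + 1) x| ≤ M) {u v : ℝ} (hu : u ∈ ball t η) (hv : v ∈ ball t η) :
    |taylorRemainder I t n u - taylorRemainder I t n v| ≤
      M * max |u - t| |v - t| ^ n * |u - v| := by
  induction n generalizing I u v with
  | zero =>
    simpa [taylorRemainder, eval_taylorPoly] using
      abs_sub_le_mul_of_hasDerivAt_ball hu hv (hI 0 le_rfl) fun y hy _ => hM y hy
  | succ n ih =>
    have ht : t ∈ ball t η := mem_ball_self (pos_of_mem_ball hu)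
    refine abs_sub_le_mul_of_hasDerivAt_ball hu hv
      (fun y hy => hasDerivAt_taylorRemainder n (hI 0 (Nat.zero_le _) y hy)) fun y hy hyt => ?_
    have hshift := ih (fun j => I (j + 1)) (fun j hj => hI (j + 1) (by omega)) hM hy ht
    rw [taylorRemainder_self, sub_zero, sub_self, abs_zero, max_eq_left (abs_nonneg _)] at hshift
    calc _ ≤ M * |y - t| ^ n * |y - t| := hshift
      _ = M * |y - t| ^ (n + 1) := by ring
      _ ≤ M * max |u - t| |v - t| ^ (n + 1) := by
        have hM0 : 0 ≤ M := (abs_nonneg _).trans (hM t ht)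
        gcongr

section ParametricIntegral

variable {G G' : ℝ × ℝ → ℝ} {w : ℝ → ℝ} {c η a b C : ℝ}

theorem aestronglyMeasurable_slice_mul (hG : ContinuousOn G (closedBall c η ×ˢ Icc a b))
    (hw : AEStronglyMeasurable w (volume.restrict (Ioc a b))) {x : ℝ} (hx : x ∈ closedBall c η) :
    AEStronglyMeasurable (fun r => G (x, r) * w r) (volume.restrict (Ioc a b)) :=
  ((hG.comp (Continuous.prodMk_right x).continuousOn fun _ hr => ⟨hx, Ioc_subset_Icc_self hr⟩)
    |>.aestronglyMeasurable measurableSet_Ioc).mul hw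

theorem exists_abs_slice_mul_le (hG : ContinuousOn G (closedBall c η ×ˢ Icc a b))
    (hwC : ∀ r ∈ Icc a b, |w r| ≤ C) :
    ∃ M, ∀ x ∈ closedBall c η, ∀ r ∈ Icc a b, |G (x, r) * w r| ≤ M := by
  obtain ⟨M, hM⟩ := ((isCompact_closedBall c η).prod isCompact_Icc).exists_bound_of_continuousOn hG
  refine ⟨max M 0 * C, fun x hx r hr => ?_⟩
  rw [abs_mul]
  exact mul_le_mul ((hM (x, r) ⟨hx, hr⟩).trans (le_max_left _ _)) (hwC r hr) (abs_nonneg _)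
    (le_max_right _ _)

theorem intervalIntegrable_slice_mul (hab : a ≤ b)
    (hG : ContinuousOn G (closedBall c η ×ˢ Icc a b))
    (hw : AEStronglyMeasurable w (volume.restrict (Ioc a b))) (hwC : ∀ r ∈ Icc a b, |w r| ≤ C)
    {x : ℝ} (hx : x ∈ closedBall c η) :
    IntervalIntegrable (fun r => G (x, r) * w r) volume a b := by
  obtain ⟨M, hM⟩ := exists_abs_slice_mul_le hG hwC
  rw [intervalIntegrable_iff_integrableOn_Ioc_of_le hab]
  refine Integrable.mono' (g := fun _ => M) (integrableOn_const measure_Ioc_lt_top.ne)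
    (aestronglyMeasurable_slice_mul hG hw hx) ?_
  filter_upwards [ae_restrict_mem measurableSet_Ioc] with r hr
  exact hM x hx r (Ioc_subset_Icc_self hr)

theorem hasDerivAt_integral_slice_mul (hab : a ≤ b)
    (hG : ContinuousOn G (closedBall c η ×ˢ Icc a b))
    (hG' : ContinuousOn G' (closedBall c η ×ˢ Icc a b))
    (hGG' : ∀ x ∈ ball c η, ∀ r ∈ Icc a b, HasDerivAt (fun x => G (x, r)) (G' (x, r)) x)
    (hw : AEStronglyMeasurable w (volume.restrict (Ioc a b))) (hwC : ∀ r ∈ Icc a b, |w r| ≤ C)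
    {x₀ : ℝ} (hx₀ : x₀ ∈ ball c η) :
    HasDerivAt (fun x => ∫ r in a..b, G (x, r) * w r) (∫ r in a..b, G' (x₀, r) * w r) x₀ := by
  obtain ⟨M, hM⟩ := exists_abs_slice_mul_le hG' hwC
  have hmeas : ∀ x ∈ closedBall c η, ∀ H : ℝ × ℝ → ℝ,
      ContinuousOn H (closedBall c η ×ˢ Icc a b) →
      AEStronglyMeasurable (fun r => H (x, r) * w r) (volume.restrict (uIoc a b)) :=
      fun x hx H hH => by
    rw [uIoc_of_le hab]; exact aestronglyMeasurable_slice_mul hH hw hx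
  refine (hasDerivAt_integral_of_dominated_loc_of_deriv_le (bound := fun _ => M)
    (F := fun x r => G (x, r) * w r) (F' := fun x r => G' (x, r) * w r)
    (isOpen_ball.mem_nhds hx₀) ?_ (intervalIntegrable_slice_mul hab hG hw hwC
      (ball_subset_closedBall hx₀)) (hmeas x₀ (ball_subset_closedBall hx₀) G' hG')
    ?_ intervalIntegrable_const ?_).2
  · exact eventually_of_mem (isOpen_ball.mem_nhds hx₀) fun x hx =>
      hmeas x (ball_subset_closedBall hx) G hG
  · refine Eventually.of_forall fun r hr x hx => ?_
    rw [uIoc_of_le hab] at hr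
    exact hM x (ball_subset_closedBall hx) r (Ioc_subset_Icc_self hr)
  · refine Eventually.of_forall fun r hr x hx => ?_
    rw [uIoc_of_le hab] at hr
    exact (hGG' x hx r (Ioc_subset_Icc_self hr)).mul_const (w r)

end ParametricIntegral

/-- `mixedPartial F j (s, r) = F^{(j,1)}(s, r)`, through Fréchet derivatives of `(s, r) ↦ F s r`. -/
def mixedPartial (F : ℝ → ℝ → ℝ) : ℕ → ℝ × ℝ → ℝ
  | 0 => fun p => fderiv ℝ (fun q : ℝ × ℝ => F q.1 q.2) p (0, 1)
  | j + 1 => fun p => fderiv ℝ (mixedPartial F j) p (1, 0)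

section MixedPartial

variable {F : ℝ → ℝ → ℝ} {U : Set (ℝ × ℝ)} {k : ℕ}

theorem contDiffOn_mixedPartial (hU : IsOpen U)
    (hF : ContDiffOn ℝ (k + 1) (fun p : ℝ × ℝ => F p.1 p.2) U) {j : ℕ} (hj : j ≤ k) :
    ContDiffOn ℝ (k - j : ℕ) (mixedPartial F j) U := by
  induction j with
  | zero => exact (hF.fderiv_of_isOpen hU (by simp)).clm_apply contDiffOn_const
  | succ j ih =>
    have hsucc : ContDiffOn ℝ ((k - (j + 1) : ℕ) + 1) (mixedPartial F j) U := by
      simpa [show k - j = k - (j + 1) + 1 by omega] using ih (by omega)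
    exact (hsucc.fderiv_of_isOpen hU le_rfl).clm_apply contDiffOn_const

theorem hasDerivAt_mixedPartial_fst (hU : IsOpen U)
    (hF : ContDiffOn ℝ (k + 1) (fun p : ℝ × ℝ => F p.1 p.2) U) {j : ℕ} (hj : j < k) {x r : ℝ}
    (hxr : (x, r) ∈ U) :
    HasDerivAt (fun x' => mixedPartial F j (x', r)) (mixedPartial F (j + 1) (x, r)) x := by
  have hdiff : DifferentiableAt ℝ (mixedPartial F j) (x, r) :=
    ((contDiffOn_mixedPartial hU hF hj.le).differentiableOn
      (by exact_mod_cast (show k - j ≠ 0 by omega))).differentiableAt (hU.mem_nhds hxr)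
  simpa [mixedPartial, Function.comp_def] using
    hdiff.hasFDerivAt.comp_hasDerivAt x ((hasDerivAt_id x).prodMk (hasDerivAt_const x r))

theorem hasDerivAt_mixedPartial_zero (hU : IsOpen U)
    (hF : ContDiffOn ℝ (k + 1) (fun p : ℝ × ℝ => F p.1 p.2) U) {x r : ℝ} (hxr : (x, r) ∈ U) :
    HasDerivAt (fun r' => F x r') (mixedPartial F 0 (x, r)) r := by
  have hdiff : DifferentiableAt ℝ (fun p : ℝ × ℝ => F p.1 p.2) (x, r) :=
    (hF.differentiableOn (by simp)).differentiableAt (hU.mem_nhds hxr)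
  simpa [mixedPartial, Function.comp_def] using
    hdiff.hasFDerivAt.comp_hasDerivAt r ((hasDerivAt_const r x).prodMk (hasDerivAt_id r))

theorem pderiv2_zero_one_eq_mixedPartial (hU : IsOpen U)
    (hF : ContDiffOn ℝ (k + 1) (fun p : ℝ × ℝ => F p.1 p.2) U) {x r : ℝ} (hxr : (x, r) ∈ U) :
    pderiv2 0 1 F x r = mixedPartial F 0 (x, r) := by
  simpa [pderiv2] using (hasDerivAt_mixedPartial_zero hU hF hxr).deriv

theorem hasDerivAt_pderiv2_zero_one (hU : IsOpen U)
    (hF : ContDiffOn ℝ (k + 1) (fun p : ℝ × ℝ => F p.1 p.2) U) {x r : ℝ} (hxr : (x, r) ∈ U) :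
    HasDerivAt (fun r' => F x r') (pderiv2 0 1 F x r) r := by
  rw [pderiv2_zero_one_eq_mixedPartial hU hF hxr]
  exact hasDerivAt_mixedPartial_zero hU hF hxr

end MixedPartial

theorem isOpen_Etil : IsOpen Etil := isOpen_lt continuous_snd continuous_fst

theorem exists_natDegree_le_abs_integral_sub_le {F : ℝ → ℝ → ℝ} {n : ℕ}
    (hF : ContDiffOn ℝ (n + 2 : ℕ) (fun p : ℝ × ℝ => F p.1 p.2) Etil)
    {w : ℝ → ℝ} {a b t η C : ℝ} (hab : a ≤ b) (hbt : b + η < t)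
    (hw : AEStronglyMeasurable w (volume.restrict (Ioc a b))) (hwC : ∀ r ∈ Icc a b, |w r| ≤ C) :
    ∃ P : ℝ[X], P.natDegree ≤ n ∧ ∃ M, ∀ u ∈ ball t η, ∀ v ∈ ball t η,
      |(∫ r in a..b, (pderiv2 0 1 F u r - pderiv2 0 1 F v r) * w r) - P.eval u + P.eval v| ≤
        M * max |u - t| |v - t| ^ n * |u - v| := by
  have hK : closedBall t η ×ˢ Icc a b ⊆ Etil := fun p ⟨hx, hr⟩ => by
    have hxt := (abs_le.1 (mem_closedBall.1 hx)).1
    show p.2 < p.1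
    linarith [hr.2]
  have hF' : ContDiffOn ℝ ((n + 1 : ℕ) + 1) (fun p : ℝ × ℝ => F p.1 p.2) Etil := by
    exact_mod_cast hF
  have hcont : ∀ j ≤ n + 1, ContinuousOn (mixedPartial F j) (closedBall t η ×ˢ Icc a b) :=
    fun j hj => (contDiffOn_mixedPartial isOpen_Etil hF' hj).continuousOn.mono hK
  set I : ℕ → ℝ → ℝ := fun j x => ∫ r in a..b, mixedPartial F j (x, r) * w r
  have hI : ∀ j ≤ n, ∀ x ∈ ball t η, HasDerivAt (I j) (I (j + 1) x) x := fun j hj x hx =>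
    hasDerivAt_integral_slice_mul hab (hcont j (by omega)) (hcont (j + 1) (by omega))
      (fun y hy r hr => hasDerivAt_mixedPartial_fst isOpen_Etil hF' (by omega)
        (hK ⟨ball_subset_closedBall hy, hr⟩)) hw hwC hx
  obtain ⟨M, hM⟩ := exists_abs_slice_mul_le (hcont (n + 1) le_rfl) hwC
  have hIM : ∀ x ∈ ball t η, |I (n + 1) x| ≤ M * |b - a| := fun x hx => by
    refine (Real.norm_eq_abs _).symm.trans_le
      (intervalIntegral.norm_integral_le_of_norm_le_const fun r hr => ?_)
    rw [uIoc_of_le hab] at hr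
    exact hM x (ball_subset_closedBall hx) r (Ioc_subset_Icc_self hr)
  have hI0 : ∀ x ∈ ball t η, ∀ r ∈ uIcc a b, pderiv2 0 1 F x r = mixedPartial F 0 (x, r) :=
    fun x hx r hr => pderiv2_zero_one_eq_mixedPartial isOpen_Etil hF'
      (hK ⟨ball_subset_closedBall hx, by rwa [uIcc_of_le hab] at hr⟩)
  have hint : ∀ x ∈ ball t η,
      IntervalIntegrable (fun r => mixedPartial F 0 (x, r) * w r) volume a b := fun x hx =>
    intervalIntegrable_slice_mul hab (hcont 0 (by omega)) hw hwC
      (ball_subset_closedBall hx)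
  refine ⟨taylorPoly I t n, natDegree_taylorPoly_le I t n, M * |b - a|, fun u hu v hv => ?_⟩
  have hsplit : (∫ r in a..b, (pderiv2 0 1 F u r - pderiv2 0 1 F v r) * w r) = I 0 u - I 0 v := by
    rw [← integral_sub (hint u hu) (hint v hv)]
    exact integral_congr fun r hr => by simp only [sub_mul, hI0 u hu r hr, hI0 v hv r hr]
  calc _ = |taylorRemainder I t n u - taylorRemainder I t n v| := by
        rw [hsplit]; unfold taylorRemainder; ring_nf
    _ ≤ _ := abs_taylorRemainder_sub_le n I hI hIM hu hv

theorem div_rpow_le_div_rpow_of_hasDerivAt {φ φ' : ℝ → ℝ} {p q x ρ : ℝ} (hpq : p ≤ q)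
    (hqx : q < x) (hφ : ContinuousOn φ (Icc p q)) (hpos : ∀ s ∈ Icc p q, 0 < φ s)
    (hderiv : ∀ s ∈ Ioo p q, HasDerivAt φ (φ' s) s)
    (hρ : ∀ s ∈ Ioo p q, -ρ ≤ (x - s) * φ' s / φ s) :
    φ p / (x - p) ^ ρ ≤ φ q / (x - q) ^ ρ := by
  have hxs : ∀ s ∈ Icc p q, 0 < x - s := fun s hs => by linarith [hs.2]
  set G : ℝ → ℝ := fun s => Real.log (φ s) - ρ * Real.log (x - s)
  have hG : ∀ s ∈ Ioo p q, HasDerivAt G (φ' s / φ s - ρ * (-1 / (x - s))) s := fun s hs =>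
    ((hderiv s hs).log (hpos s (Ioo_subset_Icc_self hs)).ne').sub
      ((((hasDerivAt_id s).const_sub x).log (hxs s (Ioo_subset_Icc_self hs)).ne').const_mul ρ)
  have hmono : MonotoneOn G (Icc p q) := by
    refine monotoneOn_of_deriv_nonneg (convex_Icc p q)
      ((hφ.log fun s hs => (hpos s hs).ne').sub
        (continuousOn_const.mul ((continuousOn_const.sub continuousOn_id).log
          fun s hs => (hxs s hs).ne')))
      (fun s hs => ?_) fun s hs => ?_ <;> rw [interior_Icc] at hs
    · exact (hG s hs).differentiableAt.differentiableWithinAt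
    · have hx := hxs s (Ioo_subset_Icc_self hs)
      have hφs := hpos s (Ioo_subset_Icc_self hs)
      have hkey := hρ s hs
      rw [(hG s hs).deriv, show φ' s / φ s - ρ * (-1 / (x - s)) =
        ((x - s) * φ' s / φ s + ρ) / (x - s) by field_simp; ring]
      exact div_nonneg (by linarith) hx.le
  have hGpq := hmono (left_mem_Icc.2 hpq) (right_mem_Icc.2 hpq) hpq
  have hp := hxs p (left_mem_Icc.2 hpq)
  have hq := hxs q (right_mem_Icc.2 hpq)
  rw [← Real.log_le_log_iff (div_pos (hpos p (left_mem_Icc.2 hpq)) (by positivity))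
      (div_pos (hpos q (right_mem_Icc.2 hpq)) (by positivity)),
    Real.log_div (hpos p (left_mem_Icc.2 hpq)).ne' (Real.rpow_pos_of_pos hp ρ).ne',
    Real.log_div (hpos q (right_mem_Icc.2 hpq)).ne' (Real.rpow_pos_of_pos hq ρ).ne',
    Real.log_rpow hp, Real.log_rpow hq]
  exact hGpq

theorem SmoothVariation.exists_mul_rpow_le {ρ ρ' : ℝ} {k : ℕ} {F : ℝ → ℝ → ℝ}
    (hF : SmoothVariation ρ k F) (hk : k ≠ 0) (hρ : ρ < ρ') (t : ℝ) :
    ∃ c > 0, ∃ δ > 0, ∀ u ∈ ball t δ, ∀ v ∈ ball t δ, v < u → c * (u - v) ^ ρ' ≤ F u v := by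
  obtain ⟨k, rfl⟩ := Nat.exists_eq_succ_of_ne_zero hk
  have hsmooth : ContDiffOn ℝ (k + 1) (fun p : ℝ × ℝ => F p.1 p.2) Etil := by
    exact_mod_cast hF.mem.smooth
  obtain ⟨h₀, hh₀, hA⟩ := hF.condA (closedBall t 1) (isCompact_closedBall t 1) (ρ' - ρ)
    (by linarith)
  obtain ⟨β, hβ, hβh₀, hβ1⟩ : ∃ β, 0 < β ∧ β < h₀ ∧ β < 1 :=
    ⟨min h₀ 1 / 2, by positivity, by linarith [min_le_left h₀ 1, lt_min hh₀ one_pos],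
      by linarith [min_le_right h₀ 1, lt_min hh₀ one_pos]⟩
  -- `F u v / (u - v) ^ ρ'` increases in `v`; compare it with its value at `v = u - β`
  obtain ⟨x₀, -, hmin⟩ := (isCompact_closedBall t (β / 2)).exists_isMinOn
    (nonempty_closedBall.2 (by positivity))
    (hF.mem.cont.comp (continuous_id.prodMk (continuous_id.sub continuous_const)).continuousOn
      fun u _ => show u - β ≤ u by linarith)
  have hc₀ : 0 < F x₀ (x₀ - β) := hF.mem.pos (x₀, x₀ - β) (show x₀ - β < x₀ by linarith)
  refine ⟨F x₀ (x₀ - β) / β ^ ρ', by positivity, β / 2, by positivity, fun u hu v hv hvu => ?_⟩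
  have huv : u - v < β := by
    have := abs_lt.1 (mem_ball.1 hu); have := abs_lt.1 (mem_ball.1 hv); linarith
  have hmono := div_rpow_le_div_rpow_of_hasDerivAt (φ := F u) (φ' := fun s => pderiv2 0 1 F u s)
    (ρ := ρ') (by linarith : u - β ≤ v) hvu
    (hF.mem.cont.comp (continuous_const.prodMk continuous_id).continuousOn
      fun s hs => show s ≤ u by linarith [hs.2])
    (fun s hs => hF.mem.pos (u, s) (show s < u by linarith [hs.2]))
    (fun s hs => hasDerivAt_pderiv2_zero_one isOpen_Etil hsmooth (show s < u by linarith [hs.2]))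
    fun s hs => by
      have huK : u ∈ closedBall t 1 := ball_subset_closedBall.trans
        (closedBall_subset_closedBall (by linarith)) hu
      have := hA (u - s) (by linarith [hs.2]) (by linarith [hs.1]) u huK
      rw [sub_sub_cancel] at this
      linarith [(abs_lt.1 this).1]
  rw [sub_sub_cancel] at hmono
  calc F x₀ (x₀ - β) / β ^ ρ' * (u - v) ^ ρ'
      ≤ F u (u - β) / β ^ ρ' * (u - v) ^ ρ' := by
        gcongr; exact hmin (ball_subset_closedBall hu)
    _ ≤ F u v / (u - v) ^ ρ' * (u - v) ^ ρ' := by gcongr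
    _ = F u v := div_mul_cancel₀ _ (Real.rpow_pos_of_pos (by linarith) ρ').ne'

theorem max_abs_sub_pow_mul_le {u v t ρ e : ℝ} {n : ℕ} (hvu : v < u) (hu : |u - t| ≤ 1)
    (hv : |v - t| ≤ 1) (hρ0 : 0 ≤ ρ) (hρ1 : ρ ≤ 1) (he : e ≤ n + 1 - ρ) :
    max |u - t| |v - t| ^ n * |u - v| ≤ 2 * (|u - t| ^ e + |v - t| ^ e) * (u - v) ^ ρ := by
  set m := max |u - t| |v - t|
  have hs : 0 < u - v := sub_pos.2 hvu
  have hsm : u - v ≤ 2 * m := by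
    have := le_abs_self (u - t); have := neg_abs_le (v - t)
    linarith [le_max_left |u - t| |v - t|, le_max_right |u - t| |v - t|]
  have hm0 : 0 < m := by linarith
  have hme : m ^ e ≤ |u - t| ^ e + |v - t| ^ e := by
    rcases le_total |u - t| |v - t| with h | h
    · rw [show m = |v - t| from max_eq_right h]
      exact le_add_of_nonneg_left (Real.rpow_nonneg (abs_nonneg _) e)
    · rw [show m = |u - t| from max_eq_left h]
      exact le_add_of_nonneg_right (Real.rpow_nonneg (abs_nonneg _) e)
  calc m ^ n * |u - v| = m ^ n * (u - v) ^ (1 - ρ) * (u - v) ^ ρ := by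
        rw [abs_of_pos hs, mul_assoc, ← Real.rpow_add hs, sub_add_cancel, Real.rpow_one]
    _ ≤ m ^ n * (2 * m) ^ (1 - ρ) * (u - v) ^ ρ := by gcongr
    _ = 2 ^ (1 - ρ) * m ^ ((n : ℝ) + 1 - ρ) * (u - v) ^ ρ := by
        rw [Real.mul_rpow zero_le_two hm0.le, add_sub_assoc, Real.rpow_add hm0, Real.rpow_natCast]
        ring
    _ ≤ 2 * m ^ e * (u - v) ^ ρ := by
        refine mul_le_mul_of_nonneg_right (mul_le_mul ?_
          (Real.rpow_le_rpow_of_exponent_ge hm0 (max_le hu hv) he) (by positivity) zero_le_two)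
          (by positivity)
        simpa using Real.rpow_le_rpow_of_exponent_le one_le_two (by linarith : 1 - ρ ≤ 1)
    _ ≤ 2 * (|u - t| ^ e + |v - t| ^ e) * (u - v) ^ ρ := by gcongr

theorem abs_le_abs_of_abs_le_mul_rpow {x y C e : ℝ} (hxy : |x| ≤ C * |y| ^ e) (hy : |y| ≤ 1)
    (he : 0 ≤ e) : |x| ≤ |C| :=
  hxy.trans <| (mul_le_mul (le_abs_self C) (Real.rpow_le_one (abs_nonneg y) hy he)
    (by positivity) (abs_nonneg C)).trans_eq (mul_one _)

theorem bound_I21_far_general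
    (d l : ℝ) (hd : d ∈ Set.Ioo (0:ℝ) 1)
    (F : ℝ → ℝ → ℝ) (hF : SmoothVariation d ((⌊l + d⌋).toNat + 2) F)
    (f : ℝ → ℝ → ℝ) (hf : f = pderiv2 0 1 F)
    (g : ℝ → ℝ) (hg : CadlagOn g)
    (t : ℝ) (ht : t ∈ Set.Ioo (0:ℝ) 1) (ε : ℝ) (hε : ε ∈ Set.Ioo (0:ℝ) l)
    (P : Polynomial ℝ)
    (C₀ : ℝ)
    (hgP : ∀ r ∈ Set.Icc (0:ℝ) 1, |g r - P.eval r| ≤ C₀ * |r - t| ^ (l - ε)) :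
    ∀ h ∈ Set.Ioo (0:ℝ) t, ∃ P3 : Polynomial ℝ, (P3.natDegree : ℤ) ≤ ⌊l + d⌋ ∧
      ∃ C > 0, ∃ h' > 0,
        ∀ u v : ℝ, u ∈ Metric.ball t h' → v ∈ Metric.ball t h' → v < u →
          |(∫ r in (0:ℝ)..(t - h), (f u r - f v r) * (g r - P.eval r))
              - P3.eval u + P3.eval v| ≤
            C * F u v * (|u - t| ^ (l - ε) + |v - t| ^ (l - ε)) := by
  rintro h ⟨hh, hht⟩
  subst hf
  obtain ⟨hd0, hd1⟩ := hd
  obtain ⟨hε0, hεl⟩ := hε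
  set n := (⌊l + d⌋).toNat
  have hn : (n : ℤ) = ⌊l + d⌋ := Int.toNat_of_nonneg (Int.floor_nonneg.2 (by linarith))
  have hnld : l + d - 1 < n := by exact_mod_cast hn ▸ Int.sub_one_lt_floor (l + d)
  obtain ⟨P3, hP3, M, hM⟩ := exists_natDegree_le_abs_integral_sub_le (a := 0) (b := t - h)
    (t := t) (η := h / 2) hF.mem.smooth (by linarith) (by linarith)
    ((hg.aestronglyMeasurable_restrict_Ioc le_rfl _).sub P.continuous.aestronglyMeasurable)
    fun r hr => abs_le_abs_of_abs_le_mul_rpow (hgP r ⟨hr.1, by linarith [hr.2, ht.2]⟩)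
      (abs_le.2 ⟨by linarith [hr.1, ht.2], by linarith [hr.2]⟩) (by linarith)
  obtain ⟨c, hc, δ, hδ, hFlow⟩ :=
    hF.exists_mul_rpow_le (ρ' := min (d + ε) 1) (by omega) (lt_min (by linarith) hd1) t
  set h' := min (min (h / 2) δ) 1
  have hball : ∀ x ∈ ball t h', x ∈ ball t (h / 2) ∧ x ∈ ball t δ ∧ |x - t| ≤ 1 :=
    fun x hx => ⟨ball_subset_ball ((min_le_left _ _).trans (min_le_left _ _)) hx,
      ball_subset_ball ((min_le_left _ _).trans (min_le_right _ _)) hx,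
      (mem_ball.1 hx).le.trans (min_le_right _ _)⟩
  refine ⟨P3, by omega, 2 * (|M| + 1) / c, by positivity, h', by positivity,
    fun u v hu hv hvu => ?_⟩
  obtain ⟨hu₁, hu₂, hu₃⟩ := hball u hu
  obtain ⟨hv₁, hv₂, hv₃⟩ := hball v hv
  calc _ ≤ M * max |u - t| |v - t| ^ n * |u - v| := hM u hu₁ v hv₁
    _ ≤ (|M| + 1) * (2 * (|u - t| ^ (l - ε) + |v - t| ^ (l - ε)) * (u - v) ^ min (d + ε) 1) := by
        rw [mul_assoc]
        exact mul_le_mul (by linarith [le_abs_self M])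
          (max_abs_sub_pow_mul_le hvu hu₃ hv₃ (by positivity) (min_le_right _ _)
            (by linarith [min_le_left (d + ε) 1])) (by positivity) (by positivity)
    _ ≤ (|M| + 1) * (2 * (|u - t| ^ (l - ε) + |v - t| ^ (l - ε)) * (F u v / c)) := by
        gcongr
        exact (le_div_iff₀ hc).2 (by linarith [hFlow u hu₂ v hv₂ hvu])
    _ = _ := by ring

/-- Lemma 6.1: bound on the far-from-`t` part of `I₂,₁`. -/
theorem bound_I21_far
    (d l : ℝ) (hd : d ∈ Set.Ioo (0:ℝ) 1) (hl : 0 < l)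
    (F : ℝ → ℝ → ℝ) (hF : SmoothVariation d ((⌊l + d⌋).toNat + 2) F)
    (f : ℝ → ℝ → ℝ) (hf : f = pderiv2 0 1 F)
    (g : ℝ → ℝ) (hg : CadlagOn g)
    (t : ℝ) (ht : t ∈ Set.Ioo (0:ℝ) 1) (ε : ℝ) (hε : ε ∈ Set.Ioo (0:ℝ) l)
    (P : Polynomial ℝ) (hP : (P.natDegree : ℤ) ≤ ⌊l⌋)
    (C₀ : ℝ) (hC₀ : 0 < C₀)
    (hgP : ∀ r ∈ Set.Icc (0:ℝ) 1, |g r - P.eval r| ≤ C₀ * |r - t| ^ (l - ε)) :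
    ∀ h ∈ Set.Ioo (0:ℝ) t, ∃ P3 : Polynomial ℝ, (P3.natDegree : ℤ) ≤ ⌊l + d⌋ ∧
      ∃ C > 0, ∃ h' > 0,
        ∀ u v : ℝ, u ∈ Metric.ball t h' → v ∈ Metric.ball t h' → v < u →
          |(∫ r in (0:ℝ)..(t - h), (f u r - f v r) * (g r - P.eval r))
              - P3.eval u + P3.eval v| ≤
            C * F u v * (|u - t| ^ (l - ε) + |v - t| ^ (l - ε)) :=
  bound_I21_far_general d l hd F hF f hf g hg t ht ε hε P C₀ hgP
end
end

section
/- Let l > 0, d ∈ (0,1), let F ∈ SR_d^{⌊d+l⌋+2}(0+), set f = F^{(0,1)}, and fix t ∈ (0,1]. Then there exists h ∈ (0,t) such that for every ε > 0, limsup_{δ↓0} δ^{2ε} ∫_{t−h}^{t−δ} (t−r)^{l−ε} ∫_t^{t+h} |f^{(⌊l+d⌋+1,0)}(z,r)| dz dr < ∞, where f^{(k,0)} denotes the k-th partial derivative of f in its first variable. -/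
open Set Filter MeasureTheory intervalIntegral Polynomial Metric
open scoped Topology

noncomputable section

/-!
With `n = ⌊l + d⌋ + 1`, Schwarz's theorem identifies `f^{(n,0)} = ∂ₛⁿ ∂ᵣ F` with `∂ᵣ ∂ₛⁿ F`,
which condition (c) bounds by a constant times `F(z, r) / (z - r)^{n+1}` near the diagonal.
Condition (a) says that the elasticity of `x ↦ F(z, z - x)` tends to `d`, so
`F(z, z - x) x^{-(d - η)}` is nondecreasing for small `x` and `F(z, z - x) ≤ C x^{d - η}`
uniformly for `z` in a compact set. Hence `|f^{(n,0)}(z, r)| ≲ (z - r)^{d - η - n - 1}`, whose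
integral over `z ∈ [t, t + h]` is `≲ (t - r)^{d - η - n}`. Taking `η = ε / 2` and using
`δ ≤ t - r`, the outer integrand is `≲ (t - r)^{l + d - n + ε / 2}`, integrable at `r = t`
because `n ≤ l + d + 1`.
-/

section PartialDerivatives

def partialFst (g : ℝ × ℝ → ℝ) (p : ℝ × ℝ) : ℝ := fderiv ℝ g p (1, 0)

def partialSnd (g : ℝ × ℝ → ℝ) (p : ℝ × ℝ) : ℝ := fderiv ℝ g p (0, 1)

variable {g : ℝ × ℝ → ℝ} {U : Set (ℝ × ℝ)}

theorem DifferentiableAt.hasDerivAt_partialFst {z r : ℝ} (hg : DifferentiableAt ℝ g (z, r)) :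
    HasDerivAt (fun s => g (s, r)) (partialFst g (z, r)) z := by
  have : HasDerivAt (fun s : ℝ => (s, r)) ((1 : ℝ), (0 : ℝ)) z :=
    (hasDerivAt_id z).prodMk (hasDerivAt_const z r)
  simpa [partialFst, Function.comp_def] using hg.hasFDerivAt.comp_hasDerivAt z this

theorem DifferentiableAt.hasDerivAt_partialSnd {z r : ℝ} (hg : DifferentiableAt ℝ g (z, r)) :
    HasDerivAt (fun s => g (z, s)) (partialSnd g (z, r)) r := by
  have : HasDerivAt (fun s : ℝ => (z, s)) ((0 : ℝ), (1 : ℝ)) r :=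
    (hasDerivAt_const r z).prodMk (hasDerivAt_id r)
  simpa [partialSnd, Function.comp_def] using hg.hasFDerivAt.comp_hasDerivAt r this

theorem ContDiffOn.differentiableAt_of_isOpen {m : ℕ} (hg : ContDiffOn ℝ m g U) (hU : IsOpen U)
    (hm : m ≠ 0) {p : ℝ × ℝ} (hp : p ∈ U) : DifferentiableAt ℝ g p :=
  (hg.differentiableOn (by exact_mod_cast hm)).differentiableAt (hU.mem_nhds hp)

theorem contDiffOn_partialFst (hU : IsOpen U) {m : ℕ} (hg : ContDiffOn ℝ (m + 1 : ℕ) g U) :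
    ContDiffOn ℝ m (partialFst g) U :=
  (hg.fderiv_of_isOpen hU (by exact_mod_cast le_rfl)).clm_apply contDiffOn_const

theorem contDiffOn_partialSnd (hU : IsOpen U) {m : ℕ} (hg : ContDiffOn ℝ (m + 1 : ℕ) g U) :
    ContDiffOn ℝ m (partialSnd g) U :=
  (hg.fderiv_of_isOpen hU (by exact_mod_cast le_rfl)).clm_apply contDiffOn_const

theorem contDiffOn_iterate_partialFst (hU : IsOpen U) (j : ℕ) {m : ℕ}
    (hg : ContDiffOn ℝ (j + m : ℕ) g U) : ContDiffOn ℝ m (partialFst^[j] g) U := by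
  induction j generalizing g with
  | zero => simpa using hg
  | succ j ih =>
    rw [Function.iterate_succ_apply]
    exact ih (contDiffOn_partialFst hU ((show j + 1 + m = j + m + 1 by omega) ▸ hg))

theorem iteratedDeriv_eq_iterate_partialFst (hU : IsOpen U) (j : ℕ)
    (hg : ContDiffOn ℝ j g U) {z r : ℝ} (hp : (z, r) ∈ U) :
    iteratedDeriv j (fun s => g (s, r)) z = partialFst^[j] g (z, r) := by
  induction j generalizing g with
  | zero => simp
  | succ j ih =>
    have hsection : ∀ᶠ s in 𝓝 z, (s, r) ∈ U :=
      (continuous_id.prodMk continuous_const).continuousAt.preimage_mem_nhds (hU.mem_nhds hp)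
    have hderiv : deriv (fun s => g (s, r)) =ᶠ[𝓝 z] fun s => partialFst g (s, r) := by
      filter_upwards [hsection] with s hs
      exact ((hg.differentiableAt_of_isOpen hU (by omega) hs).hasDerivAt_partialFst).deriv
    rw [iteratedDeriv_succ', hderiv.iteratedDeriv_eq, Function.iterate_succ_apply]
    exact ih (contDiffOn_partialFst hU hg)

theorem partialFst_partialSnd_comm {p : ℝ × ℝ} (hg : ContDiffAt ℝ 2 g p) :
    partialFst (partialSnd g) p = partialSnd (partialFst g) p := by
  have hdiff : DifferentiableAt ℝ (fderiv ℝ g) p :=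
    (hg.fderiv_right (m := 1) (by norm_num)).differentiableAt (by norm_num)
  have hsymm := hg.isSymmSndFDerivAt (by simp)
  change fderiv ℝ (fun q => fderiv ℝ g q (0, 1)) p (1, 0)
    = fderiv ℝ (fun q => fderiv ℝ g q (1, 0)) p (0, 1)
  rw [fderiv_clm_apply hdiff (differentiableAt_const _),
    fderiv_clm_apply hdiff (differentiableAt_const _)]
  simpa using hsymm (1, 0) (0, 1)

theorem iterate_partialFst_partialSnd_comm (hU : IsOpen U) (j : ℕ)
    (hg : ContDiffOn ℝ (j + 1 : ℕ) g U) {p : ℝ × ℝ} (hp : p ∈ U) :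
    partialFst^[j] (partialSnd g) p = partialSnd (partialFst^[j] g) p := by
  induction j generalizing p with
  | zero => rfl
  | succ j ih =>
    have hcomm : partialFst^[j] (partialSnd g) =ᶠ[𝓝 p] partialSnd (partialFst^[j] g) := by
      filter_upwards [hU.mem_nhds hp] with q hq
      exact ih (hg.of_le (by exact_mod_cast Nat.le_succ _)) hq
    have hC2 : ContDiffAt ℝ 2 (partialFst^[j] g) p :=
      (contDiffOn_iterate_partialFst hU j (m := 2) hg).contDiffAt (hU.mem_nhds hp)
    rw [Function.iterate_succ_apply', Function.iterate_succ_apply',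
      ← partialFst_partialSnd_comm hC2]
    exact congrArg (fun L : ℝ × ℝ →L[ℝ] ℝ => L (1, 0)) hcomm.fderiv_eq

end PartialDerivatives

theorem pderiv2_zero_one_eq_partialSnd {F : ℝ → ℝ → ℝ} {z r : ℝ}
    (hF : DifferentiableAt ℝ (fun p : ℝ × ℝ => F p.1 p.2) (z, r)) :
    pderiv2 0 1 F z r = partialSnd (fun p : ℝ × ℝ => F p.1 p.2) (z, r) := by
  simpa [pderiv2] using hF.hasDerivAt_partialSnd.deriv

theorem pderiv2_comm {F : ℝ → ℝ → ℝ} {U : Set (ℝ × ℝ)} (hU : IsOpen U) {n : ℕ}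
    (hF : ContDiffOn ℝ (n + 1 : ℕ) (fun p : ℝ × ℝ => F p.1 p.2) U) {z r : ℝ} (hp : (z, r) ∈ U) :
    pderiv2 n 0 (pderiv2 0 1 F) z r = pderiv2 n 1 F z r := by
  set g : ℝ × ℝ → ℝ := fun p => F p.1 p.2
  have hfst : (fun s => pderiv2 0 1 F s r) =ᶠ[𝓝 z] fun s => partialSnd g (s, r) := by
    filter_upwards [(continuous_id.prodMk continuous_const).continuousAt.preimage_mem_nhds
      (hU.mem_nhds hp)] with s hs
    exact pderiv2_zero_one_eq_partialSnd (hF.differentiableAt_of_isOpen hU (by omega) hs)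
  have hsnd : (fun r' => iteratedDeriv n (fun s => F s r') z) =ᶠ[𝓝 r]
      fun r' => partialFst^[n] g (z, r') := by
    filter_upwards [(continuous_const.prodMk continuous_id).continuousAt.preimage_mem_nhds
      (hU.mem_nhds hp)] with r' hr'
    exact iteratedDeriv_eq_iterate_partialFst hU n (hF.of_le (by exact_mod_cast Nat.le_succ n)) hr'
  have hdiff : DifferentiableAt ℝ (partialFst^[n] g) (z, r) :=
    (contDiffOn_iterate_partialFst hU n (m := 1) hF).differentiableAt_of_isOpen hU one_ne_zero hp
  calc pderiv2 n 0 (pderiv2 0 1 F) z r = iteratedDeriv n (fun s => partialSnd g (s, r)) z := by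
        simpa [pderiv2] using hfst.iteratedDeriv_eq n
    _ = partialFst^[n] (partialSnd g) (z, r) :=
        iteratedDeriv_eq_iterate_partialFst hU n (contDiffOn_partialSnd hU hF) hp
    _ = partialSnd (partialFst^[n] g) (z, r) := iterate_partialFst_partialSnd_comm hU n hF hp
    _ = pderiv2 n 1 F z r := by
        simpa [pderiv2, hsnd.deriv_eq] using hdiff.hasDerivAt_partialSnd.deriv.symm

theorem monotoneOn_mul_rpow_neg_of_mul_le_mul_deriv {φ φ' : ℝ → ℝ} {a b : ℝ}
    (hφ : ∀ x ∈ Ioc 0 b, HasDerivAt φ (φ' x) x) (hel : ∀ x ∈ Ioc 0 b, a * φ x ≤ x * φ' x) :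
    MonotoneOn (fun x => φ x * x ^ (-a)) (Ioc 0 b) := by
  have hderiv : ∀ x ∈ Ioc 0 b, HasDerivAt (fun x => φ x * x ^ (-a))
      (x ^ (-a - 1) * (x * φ' x - a * φ x)) x := by
    intro x hx
    refine ((hφ x hx).mul (Real.hasDerivAt_rpow_const (p := -a) (Or.inl hx.1.ne'))).congr_deriv ?_
    have hx0 : x ≠ 0 := hx.1.ne'
    rw [Real.rpow_sub_one hx0]
    field_simp
    ring
  refine monotoneOn_of_deriv_nonneg (convex_Ioc 0 b)
    (fun x hx => (hderiv x hx).continuousAt.continuousWithinAt) ?_ ?_ <;>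
    rw [interior_Ioc] <;> intro x hx
  · exact (hderiv x (Ioo_subset_Ioc_self hx)).differentiableAt.differentiableWithinAt
  · rw [(hderiv x (Ioo_subset_Ioc_self hx)).deriv]
    exact mul_nonneg (Real.rpow_nonneg hx.1.le _)
      (sub_nonneg.mpr (hel x (Ioo_subset_Ioc_self hx)))

theorem exists_le_mul_rpow_of_mul_le_neg_mul_pderiv2 {F : ℝ → ℝ → ℝ}
    (hcont : ContinuousOn (fun p : ℝ × ℝ => F p.1 p.2) Ebar)
    (hdiff : ∀ z r, r < z → DifferentiableAt ℝ (F z) r) {K : Set ℝ} (hK : IsCompact K)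
    {a a₀ : ℝ} (ha₀ : 0 < a₀)
    (hel : ∀ z ∈ K, ∀ x, 0 < x → x < a₀ → a * F z (z - x) ≤ -x * pderiv2 0 1 F z (z - x))
    (X : ℝ) : ∃ C ≥ 0, ∀ z ∈ K, ∀ x ∈ Ioc 0 X, F z (z - x) ≤ C * x ^ a := by
  obtain ⟨b, hb, hba⟩ : ∃ b, 0 < b ∧ b < a₀ := ⟨a₀ / 2, by positivity, by linarith⟩
  set ψ : ℝ × ℝ → ℝ := fun p => F p.1 (p.1 - p.2) * p.2 ^ (-a)
  have hmono : ∀ z ∈ K, MonotoneOn (fun x => ψ (z, x)) (Ioc 0 b) := by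
    intro z hz
    refine monotoneOn_mul_rpow_neg_of_mul_le_mul_deriv
      (φ' := fun x => -pderiv2 0 1 F z (z - x)) (fun x hx => ?_) (fun x hx => ?_)
    · have := (hdiff z (z - x) (by linarith [hx.1])).hasDerivAt.comp x
        ((hasDerivAt_id x).const_sub z)
      simpa [pderiv2, Function.comp_def] using this
    · simpa using hel z hz x hx.1 (by linarith [hx.2])
  have hψ : ContinuousOn ψ (K ×ˢ Icc b (max b X)) := by
    refine ContinuousOn.mul ?_ (continuousOn_snd.rpow_const fun p hp => Or.inl ?_)
    · refine hcont.comp (continuous_fst.prodMk (continuous_fst.sub continuous_snd)).continuousOn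
        fun p hp => ?_
      show p.1 - p.2 ≤ p.1
      linarith [hp.2.1]
    · exact (hb.trans_le hp.2.1).ne'
  obtain ⟨C, hC⟩ := (hK.prod isCompact_Icc).bddAbove_image hψ
  refine ⟨max C 0, le_max_right _ _, fun z hz x hx => ?_⟩
  have hψC : ψ (z, x) ≤ C := by
    rcases le_or_gt b x with hbx | hxb
    · exact hC ⟨(z, x), ⟨hz, hbx, hx.2.trans (le_max_right _ _)⟩, rfl⟩
    · exact (hmono z hz ⟨hx.1, hxb.le⟩ ⟨hb, le_rfl⟩ hxb.le).trans
        (hC ⟨(z, b), ⟨hz, le_rfl, le_max_left _ _⟩, rfl⟩)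
  calc F z (z - x) = ψ (z, x) * x ^ a := by
        simp [ψ, mul_assoc, ← Real.rpow_add hx.1]
    _ ≤ max C 0 * x ^ a :=
        mul_le_mul_of_nonneg_right (hψC.trans (le_max_left _ _)) (Real.rpow_nonneg hx.1.le _)

namespace SmoothVariation

variable {ρ : ℝ} {k : ℕ} {F : ℝ → ℝ → ℝ}

theorem differentiableAt (hF : SmoothVariation ρ k F) (hk : k ≠ 0) {z r : ℝ} (hrz : r < z) :
    DifferentiableAt ℝ (fun p : ℝ × ℝ => F p.1 p.2) (z, r) :=
  hF.mem.smooth.differentiableAt_of_isOpen isOpen_Etil hk hrz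

theorem exists_le_mul_rpow (hF : SmoothVariation ρ k F) (hk : k ≠ 0) {K : Set ℝ}
    (hK : IsCompact K) {η : ℝ} (hη : 0 < η) (X : ℝ) :
    ∃ C ≥ 0, ∀ z ∈ K, ∀ x ∈ Ioc 0 X, F z (z - x) ≤ C * x ^ (ρ - η) := by
  obtain ⟨a₀, ha₀, hA⟩ := hF.condA K hK η hη
  refine exists_le_mul_rpow_of_mul_le_neg_mul_pderiv2 hF.mem.cont (fun z r hrz => ?_) hK ha₀
    (fun z hz x hx hxa => ?_) X
  · exact (hF.differentiableAt hk hrz).hasDerivAt_partialSnd.differentiableAt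
  · have hFpos : 0 < F z (z - x) := hF.mem.pos (z, z - x) (show z - x < z by linarith)
    have hlt : x * pderiv2 0 1 F z (z - x) / F z (z - x) < η - ρ := by
      linarith [(abs_lt.mp (hA x hx hxa z hz)).2]
    rw [div_lt_iff₀ hFpos] at hlt
    linarith

theorem exists_abs_pderiv2_le {n : ℕ} (hF : SmoothVariation ρ (n + 1) F) (hn : n ≠ 0)
    {K : Set ℝ} (hK : IsCompact K) : ∃ C ≥ 0, ∃ h₀ > 0, ∀ z ∈ K, ∀ r, r < z → z - r < h₀ →
      |pderiv2 n 0 (pderiv2 0 1 F) z r| ≤ C * F z r / (z - r) ^ (n + 1) := by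
  obtain ⟨h₀, hh₀, hC⟩ := hF.condC (n + 1) (by omega) le_rfl K hK 1 one_pos
  set c := ∏ i ∈ Finset.range (n + 1), (ρ - (i : ℝ))
  refine ⟨|c| + 1, by positivity, h₀, hh₀, fun z hz r hrz hzr => ?_⟩
  have hx : 0 < z - r := sub_pos.mpr hrz
  have hFpos : 0 < F z r := hF.mem.pos (z, r) hrz
  have hcond := abs_lt.mp (hC (z - r) hx hzr z hz)
  simp only [sub_sub_cancel, Nat.add_sub_cancel] at hcond
  have hratio : |(z - r) ^ (n + 1) * pderiv2 n 1 F z r / F z r| ≤ |c| + 1 :=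
    abs_le.mpr ⟨by linarith [le_abs_self c], by linarith [neg_abs_le c]⟩
  rw [abs_div, abs_mul, abs_pow, abs_of_pos hx, abs_of_pos hFpos, div_le_iff₀ hFpos] at hratio
  rw [pderiv2_comm isOpen_Etil hF.mem.smooth hrz, le_div_iff₀ (by positivity)]
  linarith

theorem exists_abs_pderiv2_le_rpow {n : ℕ} (hF : SmoothVariation ρ (n + 1) F) (hn : n ≠ 0)
    {K : Set ℝ} (hK : IsCompact K) : ∃ h₀ > 0, ∀ η > 0, ∀ X, ∃ C ≥ 0, ∀ z ∈ K, ∀ r, r < z →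
      z - r < h₀ → z - r ≤ X →
        |pderiv2 n 0 (pderiv2 0 1 F) z r| ≤ C * (z - r) ^ (ρ - η - (n + 1)) := by
  obtain ⟨C₁, hC₁, h₀, hh₀, hderiv⟩ := hF.exists_abs_pderiv2_le hn hK
  refine ⟨h₀, hh₀, fun η hη X => ?_⟩
  obtain ⟨C₂, hC₂, hgrowth⟩ := hF.exists_le_mul_rpow (by omega) hK hη X
  refine ⟨C₁ * C₂, mul_nonneg hC₁ hC₂, fun z hz r hrz hzr hzX => ?_⟩
  have hx : 0 < z - r := sub_pos.mpr hrz
  have hF_le : F z r ≤ C₂ * (z - r) ^ (ρ - η) := by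
    simpa using hgrowth z hz (z - r) ⟨hx, hzX⟩
  calc |pderiv2 n 0 (pderiv2 0 1 F) z r| ≤ C₁ * F z r / (z - r) ^ (n + 1) := hderiv z hz r hrz hzr
    _ ≤ C₁ * (C₂ * (z - r) ^ (ρ - η)) / (z - r) ^ (n + 1) := by gcongr
    _ = C₁ * C₂ * (z - r) ^ (ρ - η - (n + 1)) := by
        rw [Real.rpow_sub hx (ρ - η), ← Nat.cast_add_one, Real.rpow_natCast]
        ring

end SmoothVariation

theorem integral_sub_rpow_le_of_lt_neg_one {β r t s : ℝ} (hβ : β < -1) (hrt : r < t)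
    (hts : t ≤ s) : ∫ z in t..s, (z - r) ^ β ≤ (t - r) ^ (β + 1) / -(β + 1) := by
  have h0 : (0 : ℝ) ∉ uIcc (t - r) (s - r) := by
    rw [uIcc_of_le (by linarith)]
    exact fun h => by linarith [h.1]
  rw [intervalIntegral.integral_comp_sub_right (fun u => u ^ β),
    integral_rpow (Or.inr ⟨hβ.ne, h0⟩)]
  calc ((s - r) ^ (β + 1) - (t - r) ^ (β + 1)) / (β + 1)
      = ((t - r) ^ (β + 1) - (s - r) ^ (β + 1)) / -(β + 1) := by
        rw [div_neg, ← neg_div, neg_sub]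
    _ ≤ (t - r) ^ (β + 1) / -(β + 1) := by
        gcongr
        · linarith
        · exact sub_le_self _ (Real.rpow_nonneg (by linarith) _)

theorem integral_sub_rpow_le {q t h δ : ℝ} (hq : -1 < q) (hδ : 0 ≤ δ) :
    ∫ r in (t - h)..(t - δ), (t - r) ^ q ≤ h ^ (q + 1) / (q + 1) := by
  rw [intervalIntegral.integral_comp_sub_left (fun u => u ^ q), sub_sub_cancel, sub_sub_cancel,
    integral_rpow (Or.inl hq)]
  gcongr
  · linarith
  · exact sub_le_self _ (Real.rpow_nonneg hδ _)

theorem exists_bound_rpow_mul_integral_integral {g : ℝ → ℝ → ℝ} {t h l ε β C : ℝ}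
    (hε : 0 ≤ ε) (hβ : β < -1) (hq : -1 < l + ε + β + 1) (hC : 0 ≤ C)
    (hg : ∀ z ∈ Icc t (t + h), ∀ r ∈ Ico (t - h) t, |g z r| ≤ C * (z - r) ^ β) :
    ∃ M, ∀ δ, 0 < δ → δ < h → δ ^ (2 * ε) *
      (∫ r in (t - h)..(t - δ), (t - r) ^ (l - ε) * ∫ z in t..(t + h), |g z r|) ≤ M := by
  set C' := C / -(β + 1)
  set q := l + ε + β + 1
  have hC' : 0 ≤ C' := div_nonneg hC (by linarith)
  refine ⟨C' * (h ^ (q + 1) / (q + 1)), fun δ hδ hδh => ?_⟩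
  have hinner : ∀ r ∈ Ico (t - h) t,
      ∫ z in t..(t + h), |g z r| ≤ C' * (t - r) ^ (β + 1) := by
    intro r hr
    have hmajorant : IntervalIntegrable (fun z => C * (z - r) ^ β) volume t (t + h) := by
      refine ContinuousOn.intervalIntegrable (continuousOn_const.mul
        ((continuousOn_id.sub continuousOn_const).rpow_const fun z hz => Or.inl ?_))
      rw [uIcc_of_le (by linarith [hr.1])] at hz
      exact (sub_pos.mpr (hr.2.trans_le hz.1)).ne'
    calc ∫ z in t..(t + h), |g z r|
        ≤ ∫ z in t..(t + h), C * (z - r) ^ β :=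
          Real.le_norm_self _ |>.trans (norm_integral_le_of_norm_le (by linarith [hr.1])
            (ae_of_all _ fun z hz => by simpa using hg z (Ioc_subset_Icc_self hz) r hr) hmajorant)
      _ = C * ∫ z in t..(t + h), (z - r) ^ β := intervalIntegral.integral_const_mul _ _
      _ ≤ C * ((t - r) ^ (β + 1) / -(β + 1)) := by
          gcongr
          exact integral_sub_rpow_le_of_lt_neg_one hβ hr.2 (by linarith [hr.1])
      _ = C' * (t - r) ^ (β + 1) := by ring
  have houter : ∀ r ∈ Ioc (t - h) (t - δ),
      ‖δ ^ (2 * ε) * ((t - r) ^ (l - ε) * ∫ z in t..(t + h), |g z r|)‖ ≤ C' * (t - r) ^ q := by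
    intro r hr
    have hδr : δ ≤ t - r := by linarith [hr.2]
    have htr : 0 < t - r := hδ.trans_le hδr
    have hI : 0 ≤ ∫ z in t..(t + h), |g z r| :=
      intervalIntegral.integral_nonneg (by linarith) fun _ _ => abs_nonneg _
    rw [Real.norm_of_nonneg (by positivity)]
    calc δ ^ (2 * ε) * ((t - r) ^ (l - ε) * ∫ z in t..(t + h), |g z r|)
        ≤ (t - r) ^ (2 * ε) * ((t - r) ^ (l - ε) * (C' * (t - r) ^ (β + 1))) :=
          mul_le_mul (Real.rpow_le_rpow hδ.le hδr (by positivity))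
            (mul_le_mul_of_nonneg_left (hinner r ⟨hr.1.le, by linarith⟩) (by positivity))
            (by positivity) (by positivity)
      _ = C' * (t - r) ^ q := by
          rw [show q = 2 * ε + (l - ε) + (β + 1) by ring, Real.rpow_add htr (2 * ε + (l - ε)),
            Real.rpow_add htr (2 * ε)]
          ring
  have hmajorant : IntervalIntegrable (fun r => C' * (t - r) ^ q) volume (t - h) (t - δ) := by
    refine ContinuousOn.intervalIntegrable (continuousOn_const.mul
      ((continuousOn_const.sub continuousOn_id).rpow_const fun r hr => Or.inl ?_))
    rw [uIcc_of_le (by linarith)] at hr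
    show t - r ≠ 0
    exact (sub_pos.mpr (by linarith [hr.2])).ne'
  calc δ ^ (2 * ε) * (∫ r in (t - h)..(t - δ), (t - r) ^ (l - ε) * ∫ z in t..(t + h), |g z r|)
      = ∫ r in (t - h)..(t - δ), δ ^ (2 * ε) * ((t - r) ^ (l - ε) * ∫ z in t..(t + h), |g z r|) :=
        (intervalIntegral.integral_const_mul _ _).symm
    _ ≤ ∫ r in (t - h)..(t - δ), C' * (t - r) ^ q :=
        Real.le_norm_self _ |>.trans (norm_integral_le_of_norm_le (by linarith) (ae_of_all _ houter)
          hmajorant)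
    _ = C' * ∫ r in (t - h)..(t - δ), (t - r) ^ q := intervalIntegral.integral_const_mul _ _
    _ ≤ C' * (h ^ (q + 1) / (q + 1)) := by
        gcongr
        exact integral_sub_rpow_le hq hδ.le

/-- Lemma 6.2: there exists `h ∈ (0,t)` such that for every `ε > 0` the
quantity `δ^{2ε} ∫_{t−h}^{t−δ} (t−r)^{l−ε} ∫_t^{t+h} |f^{(⌊l+d⌋+1,0)}(z,r)| dz dr`
stays bounded as `δ ↓ 0`. -/
theorem bounded_iterated_integral
    (l d : ℝ) (hl : 0 < l) (hd : d ∈ Set.Ioo (0:ℝ) 1)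
    (F : ℝ → ℝ → ℝ) (hF : SmoothVariation d ((⌊d + l⌋).toNat + 2) F)
    (f : ℝ → ℝ → ℝ) (hf : f = pderiv2 0 1 F)
    (t : ℝ) (ht : t ∈ Set.Ioc (0:ℝ) 1) :
    ∃ h ∈ Set.Ioo (0:ℝ) t, ∀ ε > 0, ∃ M : ℝ, ∃ δ₀ > 0, ∀ δ : ℝ, 0 < δ → δ < δ₀ →
      δ ^ (2 * ε) * (∫ r in (t - h)..(t - δ), (t - r) ^ (l - ε) *
        ∫ z in t..(t + h), |pderiv2 ((⌊l + d⌋).toNat + 1) 0 f z r|) ≤ M := by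
  subst hf
  set n := ⌊l + d⌋.toNat + 1 with hn
  have hln : l + d < n ∧ (n : ℝ) ≤ l + d + 1 := by
    rw [hn, Int.floor_toNat]
    push_cast
    exact ⟨Nat.lt_floor_add_one _, by linarith [Nat.floor_le (by linarith [hd.1] : 0 ≤ l + d)]⟩
  rw [add_comm d l, show ⌊l + d⌋.toNat + 2 = n + 1 by omega] at hF
  obtain ⟨h₀, hh₀, hbound⟩ :=
    hF.exists_abs_pderiv2_le_rpow (by omega) (isCompact_Icc (a := t) (b := 2 * t))
  set h := min (t / 2) (h₀ / 3)
  have hh : 0 < h := lt_min (by linarith [ht.1]) (by linarith)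
  have hht : h ≤ t / 2 := min_le_left _ _
  have hhh₀ : h ≤ h₀ / 3 := min_le_right _ _
  refine ⟨h, ⟨hh, by linarith⟩, fun ε hε => ?_⟩
  obtain ⟨C, hC, hCbound⟩ := hbound (ε / 2) (half_pos hε) (2 * h)
  obtain ⟨M, hM⟩ := exists_bound_rpow_mul_integral_integral (t := t) (h := h) (l := l) hε.le
    (β := d - ε / 2 - (n + 1)) (by linarith [hd.1]) (by linarith) hC
    (fun z hz r hr => hCbound z ⟨hz.1, by linarith [hz.2]⟩ r (by linarith [hz.1, hr.2])
      (by linarith [hz.2, hr.1]) (by linarith [hz.2, hr.1]))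
  exact ⟨M, h, hh, hM⟩
end
end
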